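/- arXiv:1608.07857 — 10 statements merged into one kernel-verified Lean document; each statement's English description precedes it below -/
import Mathlib

section
/- Let λ, β, μ, T > 0, σ² ≥ 0, α > 2 and 0 < a ≤ 1. Define the density of successful receptions f(γ) = λ(a−γ) · πλγ ∫₀^∞ exp(−πλγβr − μTσ²·r^{α/2}) dr for γ ∈ (0, a). Then every critical point γ₁ ∈ (0, a) of f (i.e., every point where f′(γ₁) = 0) satisfies γ₁ < a/2. In particular, any maximizer of f on (0, a) is a transmitter fraction γ₁ < a/2, and the corresponding receiver fraction γ₂ = a − γ₁ satisfies γ₂ > a/2. -/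
/-!
Writing `P(ν) = πν L(πβν)` with `L(s) = ∫₀^∞ exp(-s r - h r) dr` and `h r = μTσ² r^{α/2} ≥ 0`,
the density is `f(γ) = C (a - γ) γ L(πλβγ)` with `C = πλ² > 0`. Differentiating under the
integral sign, `L` is differentiable with `L' = -∫₀^∞ r exp(-s r - h r) dr < 0`, so at a
critical point `(a - 2γ) L = -(a - γ) γ πλβ L' > 0`, which forces `γ < a/2`.
-/

open Real MeasureTheory Set

noncomputable def laplaceExpNeg (h : ℝ → ℝ) (s : ℝ) : ℝ :=
  ∫ r in Ioi (0:ℝ), exp (-(s * r) - h r)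

lemma integrableOn_mul_exp_neg_mul {b : ℝ} (hb : 0 < b) :
    IntegrableOn (fun r : ℝ => r * exp (-(b * r))) (Ioi 0) := by
  refine (integrableOn_rpow_mul_exp_neg_mul_rpow (s := 1) (p := 1) (by norm_num) one_pos
    hb).congr_fun (fun r _ => ?_) measurableSet_Ioi
  simp only [rpow_one, neg_mul]

lemma exp_neg_mul_sub_le {s r t : ℝ} (ht : 0 ≤ t) : exp (-(s * r) - t) ≤ exp (-(s * r)) :=
  exp_le_exp.2 (by linarith)

namespace laplaceExpNeg

variable {h : ℝ → ℝ}

lemma integrableOn (hh : Measurable h) (hnonneg : ∀ r, 0 < r → 0 ≤ h r) {s : ℝ} (hs : 0 < s) :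
    IntegrableOn (fun r => exp (-(s * r) - h r)) (Ioi 0) := by
  refine (exp_neg_integrableOn_Ioi 0 hs).mono' (by fun_prop) ?_
  filter_upwards [self_mem_ae_restrict measurableSet_Ioi] with r hr
  rw [norm_of_nonneg (exp_pos _).le, neg_mul]
  exact exp_neg_mul_sub_le (hnonneg r hr)

lemma integrableOn_mul (hh : Measurable h) (hnonneg : ∀ r, 0 < r → 0 ≤ h r) {s : ℝ}
    (hs : 0 < s) : IntegrableOn (fun r => r * exp (-(s * r) - h r)) (Ioi 0) := by
  refine (integrableOn_mul_exp_neg_mul hs).mono' (by fun_prop) ?_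
  filter_upwards [self_mem_ae_restrict measurableSet_Ioi] with r (hr : 0 < r)
  rw [norm_of_nonneg (by positivity)]
  exact mul_le_mul_of_nonneg_left (exp_neg_mul_sub_le (hnonneg r hr)) hr.le

lemma nonneg (s : ℝ) : 0 ≤ laplaceExpNeg h s :=
  setIntegral_nonneg measurableSet_Ioi fun _ _ => (exp_pos _).le

lemma integral_mul_pos (hh : Measurable h) (hnonneg : ∀ r, 0 < r → 0 ≤ h r) {s : ℝ}
    (hs : 0 < s) : 0 < ∫ r in Ioi (0:ℝ), r * exp (-(s * r) - h r) := by
  rw [setIntegral_pos_iff_support_of_nonneg_ae _ (integrableOn_mul hh hnonneg hs)]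
  · have hsupp : Function.support (fun r => r * exp (-(s * r) - h r)) ∩ Ioi 0 = Ioi 0 :=
      inter_eq_right.2 fun r (hr : 0 < r) => (mul_pos hr (exp_pos _)).ne'
    rw [hsupp]
    simp
  · filter_upwards [self_mem_ae_restrict measurableSet_Ioi] with r (hr : 0 < r)
    positivity

/-- Differentiation under the integral sign, dominated on `(s/2, 3s/2)` by `r exp(-s r / 2)`. -/
lemma hasDerivAt (hh : Measurable h) (hnonneg : ∀ r, 0 < r → 0 ≤ h r) {s : ℝ} (hs : 0 < s) :
    HasDerivAt (laplaceExpNeg h) (-∫ r in Ioi (0:ℝ), r * exp (-(s * r) - h r)) s := by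
  have hball : ∀ x ∈ Metric.ball s (s / 2), s / 2 < x := fun x hx => by
    rw [Metric.mem_ball, dist_eq, abs_lt] at hx
    linarith [hx.1]
  have key := hasDerivAt_integral_of_dominated_loc_of_deriv_le
    (F := fun x r => exp (-(x * r) - h r)) (F' := fun x r => -(r * exp (-(x * r) - h r)))
    (bound := fun r => r * exp (-(s / 2 * r))) (μ := volume.restrict (Ioi 0))
    (Metric.ball_mem_nhds s (half_pos hs)) (.of_forall fun _ => by fun_prop)
    (integrableOn hh hnonneg hs) (by fun_prop) ?bound (integrableOn_mul_exp_neg_mul (half_pos hs))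
    ?deriv
  · rw [integral_neg] at key
    exact key.2
  case bound =>
    filter_upwards [self_mem_ae_restrict measurableSet_Ioi] with r (hr : 0 < r) x hx
    rw [norm_neg, norm_of_nonneg (by positivity)]
    refine mul_le_mul_of_nonneg_left
      ((exp_neg_mul_sub_le (hnonneg r hr)).trans (exp_le_exp.2 ?_)) hr.le
    nlinarith [hball x hx]
  case deriv =>
    refine .of_forall fun r x _ => ?_
    have hlin : HasDerivAt (fun x => -(x * r) - h r) (-r) x := by
      simpa using ((hasDerivAt_id x).mul_const r).neg.sub_const (h r)
    exact hlin.exp.congr_deriv (by ring)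

end laplaceExpNeg

/-- The product rule gives `f'(x) = C ((a - 2x) φ x + (a - x) x φ')`, and the second summand is
negative. -/
lemma lt_half_of_hasDerivAt_const_mul_sub_mul_eq_zero {φ : ℝ → ℝ} {C a x φ' : ℝ} (hC : C ≠ 0)
    (hx : x ∈ Ioo 0 a) (hφ : HasDerivAt φ φ' x) (hφ_nonneg : 0 ≤ φ x) (hφ' : φ' < 0)
    (hcrit : HasDerivAt (fun y => C * ((a - y) * (y * φ y))) 0 x) : x < a / 2 := by
  obtain ⟨hx0, hxa⟩ := hx
  have hderiv : HasDerivAt (fun y => C * ((a - y) * (y * φ y)))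
      (C * ((a - 2 * x) * φ x + (a - x) * x * φ')) x :=
    ((((hasDerivAt_id x).const_sub a).mul ((hasDerivAt_id x).mul hφ)).const_mul C).congr_deriv
      (by simp only [Pi.mul_apply, id]; ring)
  have hzero : (a - 2 * x) * φ x + (a - x) * x * φ' = 0 :=
    (mul_eq_zero.mp (hderiv.unique hcrit)).resolve_left hC
  have hneg : (a - x) * x * φ' < 0 := mul_neg_of_pos_of_neg (by nlinarith) hφ'
  have hpos : 0 < (a - 2 * x) * φ x := by linarith
  linarith [pos_of_mul_pos_left hpos hφ_nonneg]

theorem critical_point_transmitter_fraction_lt_half_general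
    (lam β μ T σ2 α a γ₁ : ℝ)
    (hlam : 0 < lam) (hβ : 0 < β) (hμ : 0 < μ) (hT : 0 < T) (hσ2 : 0 ≤ σ2)
    (f : ℝ → ℝ)
    (hf : ∀ γ, f γ = lam * (a - γ) *
      (π * lam * γ * ∫ r in Ioi (0:ℝ),
        Real.exp (-(π * lam * γ * β * r) - μ * T * σ2 * r ^ (α / 2))))
    (hγ₁ : γ₁ ∈ Ioo 0 a)
    (hcrit : HasDerivAt f 0 γ₁) :
    γ₁ < a / 2 ∧ a / 2 < a - γ₁ := by
  set h : ℝ → ℝ := fun r => μ * T * σ2 * r ^ (α / 2)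
  have hh : Measurable h := by fun_prop
  have hnonneg : ∀ r, 0 < r → 0 ≤ h r := fun r hr => by positivity
  set φ : ℝ → ℝ := fun x => laplaceExpNeg h (π * lam * x * β)
  have hf_eq : f = fun y => lam * (π * lam) * ((a - y) * (y * φ y)) :=
    funext fun y => by rw [hf]; simp only [φ, laplaceExpNeg, h]; ring
  have hs : 0 < π * lam * γ₁ * β := by have := hγ₁.1; positivity
  have hφ : HasDerivAt φ ((-∫ r in Ioi (0:ℝ), r * exp (-(π * lam * γ₁ * β * r) - h r)) *
      (π * lam * β)) γ₁ := by
    have hlin : HasDerivAt (fun x => π * lam * x * β) (π * lam * β) γ₁ := by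
      simpa using ((hasDerivAt_id γ₁).const_mul (π * lam)).mul_const β
    exact (laplaceExpNeg.hasDerivAt hh hnonneg hs).comp γ₁ hlin
  have hφ' := mul_neg_of_neg_of_pos (neg_neg_of_pos (laplaceExpNeg.integral_mul_pos hh hnonneg hs))
    (by positivity : 0 < π * lam * β)
  have hlt := lt_half_of_hasDerivAt_const_mul_sub_mul_eq_zero (by positivity) hγ₁ hφ
    (laplaceExpNeg.nonneg _) hφ' (hf_eq ▸ hcrit)
  exact ⟨hlt, by linarith⟩

/-- Every critical point of the single-file density of successful receptions
`f(γ) = λ(a−γ) · πλγ ∫₀^∞ exp(−πλγβr − μTσ²·r^{α/2}) dr` on `(0, a)` has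
transmitter fraction `γ₁ < a/2`, hence receiver fraction `a − γ₁ > a/2`. -/
theorem critical_point_transmitter_fraction_lt_half
    (lam β μ T σ2 α a γ₁ : ℝ)
    (hlam : 0 < lam) (hβ : 0 < β) (hμ : 0 < μ) (hT : 0 < T) (hσ2 : 0 ≤ σ2)
    (hα : 2 < α) (ha : 0 < a) (ha1 : a ≤ 1)
    (f : ℝ → ℝ)
    (hf : ∀ γ, f γ = lam * (a - γ) *
      (π * lam * γ * ∫ r in Ioi (0:ℝ),
        Real.exp (-(π * lam * γ * β * r) - μ * T * σ2 * r ^ (α / 2))))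
    (hγ₁ : γ₁ ∈ Ioo 0 a)
    (hcrit : HasDerivAt f 0 γ₁) :
    γ₁ < a / 2 ∧ a / 2 < a - γ₁ :=
  critical_point_transmitter_fraction_lt_half_general lam β μ T σ2 α a γ₁ hlam hβ hμ hT hσ2 f hf hγ₁
    hcrit
end

section
/- Let λ, μ, T > 0, σ² > 0 and 0 < a ≤ 1, and set β = 1 + √T·arctan(√T). Define p(γ) = πλγ ∫₀^∞ exp(−πλγβr − μTσ²·r²) dr and f(γ) = λ(a−γ)·p(γ) for γ ∈ (0, a). If γ₁ ∈ (0, a) satisfies f′(γ₁) = 0 (in particular, if γ₁ maximizes f on (0, a)), then f(γ₁) = λ(a−γ₁) / ( (1/γ₁)·(1/γ₁ − 1/(a−γ₁))·(2μTσ²) / ((πλ)²·β) + β ). -/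
open Real MeasureTheory Set Filter Topology

/-!
Write `I(s) = ∫₀^∞ e^{-sr-cr²} dr` and `M(s) = ∫₀^∞ r e^{-sr-cr²} dr` with `c = μTσ²`, so that
`f(γ) = λ(a-γ)·πλγ·I(πλβγ)`. Differentiating under the integral sign gives `I' = -M`, so a critical
point satisfies `(a - 2γ) I = (a - γ) γ πλβ M`; integration by parts gives `s I(s) + 2c M(s) = 1`.
Eliminating `M` between these two relations yields `I`, hence `f(γ₁)`, in closed form.
-/

noncomputable def laplaceGauss (c s : ℝ) : ℝ :=
  ∫ r in Ioi (0:ℝ), exp (-(s * r) - c * r ^ 2)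

noncomputable def laplaceGaussMoment (c s : ℝ) : ℝ :=
  ∫ r in Ioi (0:ℝ), r * exp (-(s * r) - c * r ^ 2)

section LaplaceGauss

variable {c s : ℝ}

lemma tendsto_exp_neg_mul_sub_mul_sq (hs : 0 ≤ s) (hc : 0 < c) :
    Tendsto (fun r : ℝ => exp (-(s * r) - c * r ^ 2)) atTop (𝓝 0) := by
  refine tendsto_exp_atBot.comp (tendsto_atBot_mono' atTop ?_
    (tendsto_neg_const_mul_pow_atTop two_ne_zero (neg_neg_of_pos hc)))
  filter_upwards [eventually_ge_atTop 0] with r hr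
  nlinarith [mul_nonneg hs hr]

lemma hasDerivAt_neg_exp_neg_mul_sub_mul_sq (s c r : ℝ) :
    HasDerivAt (fun r : ℝ => -exp (-(s * r) - c * r ^ 2))
      ((s + 2 * c * r) * exp (-(s * r) - c * r ^ 2)) r := by
  refine ((((hasDerivAt_id' r).const_mul s).neg.sub
    ((hasDerivAt_pow 2 r).const_mul c)).exp).neg.congr_deriv ?_
  norm_num
  ring

lemma integrableOn_exp_neg_mul_sub_mul_sq (hs : 0 ≤ s) (hc : 0 < c) :
    IntegrableOn (fun r : ℝ => exp (-(s * r) - c * r ^ 2)) (Ioi 0) := by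
  refine (integrable_exp_neg_mul_sq hc).integrableOn.mono' (by fun_prop) ?_
  filter_upwards [ae_restrict_mem measurableSet_Ioi] with r (hr : 0 < r)
  rw [norm_of_nonneg (exp_nonneg _), exp_le_exp]
  nlinarith [mul_nonneg hs hr.le]

lemma integrableOn_mul_exp_neg_mul_sub_mul_sq (hs : 0 ≤ s) (hc : 0 < c) :
    IntegrableOn (fun r : ℝ => r * exp (-(s * r) - c * r ^ 2)) (Ioi 0) := by
  refine (integrable_mul_exp_neg_mul_sq hc).integrableOn.mono' (by fun_prop) ?_
  filter_upwards [ae_restrict_mem measurableSet_Ioi] with r (hr : 0 < r)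
  rw [norm_of_nonneg (by positivity)]
  gcongr
  nlinarith [mul_nonneg hs hr.le]

lemma laplaceGauss_add_moment (hs : 0 ≤ s) (hc : 0 < c) :
    s * laplaceGauss c s + 2 * c * laplaceGaussMoment c s = 1 := by
  have hint : IntegrableOn (fun r : ℝ => (s + 2 * c * r) * exp (-(s * r) - c * r ^ 2)) (Ioi 0) :=
    IntegrableOn.congr_fun (((integrableOn_exp_neg_mul_sub_mul_sq hs hc).const_mul s).add
      ((integrableOn_mul_exp_neg_mul_sub_mul_sq hs hc).const_mul (2 * c)))
      (fun r _ => by simp only [Pi.add_apply]; ring) measurableSet_Ioi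
  have h := integral_Ioi_of_hasDerivAt_of_tendsto'
    (fun r _ => hasDerivAt_neg_exp_neg_mul_sub_mul_sq s c r) hint
    (tendsto_exp_neg_mul_sub_mul_sq hs hc).neg
  rw [laplaceGauss, laplaceGaussMoment, ← integral_const_mul, ← integral_const_mul,
    ← integral_add ((integrableOn_exp_neg_mul_sub_mul_sq hs hc).const_mul s)
      ((integrableOn_mul_exp_neg_mul_sub_mul_sq hs hc).const_mul (2 * c))]
  simpa [add_mul, mul_assoc] using h

lemma hasDerivAt_laplaceGauss (hs : 0 < s) (hc : 0 < c) :
    HasDerivAt (laplaceGauss c) (-laplaceGaussMoment c s) s := by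
  have key := hasDerivAt_integral_of_dominated_loc_of_deriv_le
    (μ := volume.restrict (Ioi (0:ℝ))) (x₀ := s) (s := Ioi 0)
    (F := fun x r => exp (-(x * r) - c * r ^ 2))
    (F' := fun x r => -(r * exp (-(x * r) - c * r ^ 2)))
    (bound := fun r => r * exp (-(0 * r) - c * r ^ 2))
    (Ioi_mem_nhds hs) (.of_forall fun _ => by fun_prop)
    (integrableOn_exp_neg_mul_sub_mul_sq hs.le hc) (by fun_prop) ?_
    (integrableOn_mul_exp_neg_mul_sub_mul_sq le_rfl hc) ?_
  · rw [laplaceGaussMoment, ← integral_neg]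
    exact key.2
  · filter_upwards [ae_restrict_mem measurableSet_Ioi] with r (hr : 0 < r) x (hx : 0 < x)
    rw [norm_neg, norm_of_nonneg (by positivity)]
    gcongr
  · refine .of_forall fun r x _ => ?_
    refine (((hasDerivAt_id' x).mul_const r).neg.sub_const (c * r ^ 2)).exp.congr_deriv ?_
    simp only [Pi.neg_apply]
    ring

end LaplaceGauss

theorem dsr_value_at_critical_point_alpha_four_general
    (lam μ T σ2 a γ₁ : ℝ)
    (hlam : 0 < lam) (hμ : 0 < μ) (hT : 0 < T) (hσ2 : 0 < σ2)
    (β : ℝ) (hβ : β = 1 + Real.sqrt T * Real.arctan (Real.sqrt T))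
    (p f : ℝ → ℝ)
    (hp : ∀ γ, p γ = π * lam * γ * ∫ r in Ioi (0:ℝ),
      Real.exp (-(π * lam * γ * β * r) - μ * T * σ2 * r ^ 2))
    (hf : ∀ γ, f γ = lam * (a - γ) * p γ)
    (hγ₁ : γ₁ ∈ Ioo 0 a)
    (hcrit : HasDerivAt f 0 γ₁) :
    f γ₁ = lam * (a - γ₁) /
      ((1 / γ₁) * (1 / γ₁ - 1 / (a - γ₁)) * (2 * μ * T * σ2) /
        ((π * lam) ^ 2 * β) + β) := by
  obtain ⟨hγ0, hγa⟩ := hγ₁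
  have hβ0 : 0 < β := by
    have := arctan_nonneg.mpr (sqrt_nonneg T)
    rw [hβ]; positivity
  have hc : 0 < μ * T * σ2 := by positivity
  have hs : 0 < π * lam * γ₁ * β := by positivity
  have hfI : f = fun γ =>
      lam * (a - γ) * (π * lam * γ * laplaceGauss (μ * T * σ2) (π * lam * γ * β)) :=
    funext fun γ => by rw [hf, hp, laplaceGauss]
  have hsγ : HasDerivAt (fun γ => π * lam * γ * β) (π * lam * β) γ₁ :=
    (((hasDerivAt_id' γ₁).const_mul (π * lam)).mul_const β).congr_deriv (by ring)
  have hf' := ((hasDerivAt_id' γ₁).const_sub a |>.const_mul lam).mul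
    (((hasDerivAt_id' γ₁).const_mul (π * lam)).mul ((hasDerivAt_laplaceGauss hs hc).comp γ₁ hsγ))
  rw [hfI] at hcrit
  have hcrit_eq := hcrit.unique hf'
  simp only [Pi.mul_apply, Function.comp_apply] at hcrit_eq
  have hibp := laplaceGauss_add_moment hs.le hc
  set I := laplaceGauss (μ * T * σ2) (π * lam * γ₁ * β)
  set M := laplaceGaussMoment (μ * T * σ2) (π * lam * γ₁ * β)
  have hIM : (a - 2 * γ₁) * I = (a - γ₁) * γ₁ * (π * lam * β) * M := by
    refine mul_left_cancel₀ (by positivity : lam * (π * lam) ≠ 0) ?_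
    linear_combination -hcrit_eq
  have hIQ : π * lam * γ₁ * I * ((1 / γ₁) * (1 / γ₁ - 1 / (a - γ₁)) * (2 * μ * T * σ2) /
        ((π * lam) ^ 2 * β) + β) = 1 := by
    field_simp
    linear_combination 2 * (μ * T * σ2) * hIM + (a - γ₁) * γ₁ * (π * lam * β) * hibp
  rw [hfI]
  exact eq_div_of_mul_eq (right_ne_zero_of_mul_eq_one hIQ)
    (by linear_combination lam * (a - γ₁) * hIQ)

/-- For path-loss exponent `α = 4` with `β = 1 + √T·arctan √T`, at any critical
point `γ₁ ∈ (0,a)` of the density of successful receptions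
`f(γ) = λ(a−γ)·p(γ)` with `p(γ) = πλγ ∫₀^∞ exp(−πλγβr − μTσ²r²) dr`, the value
of `f` admits the stated closed form. -/
theorem dsr_value_at_critical_point_alpha_four
    (lam μ T σ2 a γ₁ : ℝ)
    (hlam : 0 < lam) (hμ : 0 < μ) (hT : 0 < T) (hσ2 : 0 < σ2)
    (ha : 0 < a) (ha1 : a ≤ 1)
    (β : ℝ) (hβ : β = 1 + Real.sqrt T * Real.arctan (Real.sqrt T))
    (p f : ℝ → ℝ)
    (hp : ∀ γ, p γ = π * lam * γ * ∫ r in Ioi (0:ℝ),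
      Real.exp (-(π * lam * γ * β * r) - μ * T * σ2 * r ^ 2))
    (hf : ∀ γ, f γ = lam * (a - γ) * p γ)
    (hγ₁ : γ₁ ∈ Ioo 0 a)
    (hcrit : HasDerivAt f 0 γ₁) :
    f γ₁ = lam * (a - γ₁) /
      ((1 / γ₁) * (1 / γ₁ - 1 / (a - γ₁)) * (2 * μ * T * σ2) /
        ((π * lam) ^ 2 * β) + β) :=
  dsr_value_at_critical_point_alpha_four_general lam μ T σ2 a γ₁ hlam hμ hT hσ2 β hβ p f hp hf hγ₁
    hcrit
end

section
/- Let λ, μ, T > 0, σ² > 0 and 0 < a ≤ 1, and set β = 1 + √T·arctan(√T). Define p(γ) = πλγ ∫₀^∞ exp(−πλγβr − μTσ²·r²) dr and f(γ) = λ(a−γ)·p(γ) for γ ∈ (0, a). If γ₁ ∈ (0, a) satisfies f′(γ₁) = 0, then (1/γ₁)·(1/γ₁ − 1/(a−γ₁)) = ((πλ)²β² / (2μTσ²)) · ( 1/(β·p(γ₁)) − 1 ), and the right-hand side is strictly positive. -/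
/-!
Write `J(u) = ∫₀^∞ exp(-u r - c r²) dr` and `K(u) = ∫₀^∞ r exp(-u r - c r²) dr` with `c = μTσ²`,
so that `p(γ) = πλγ J(u)` with `u = πλγβ`, hence `β p(γ) = u J(u)`. Differentiating under the
integral gives `J' = -K`, and integrating `d/dr (-exp(-u r - c r²))` over `(0, ∞)` gives
`u J + 2c K = 1`. The critical-point equation `f'(γ₁) = 0` reads `γ₁ J = (a - γ₁)(J - u K)`;
eliminating `K` with the integration by parts identity yields the claimed identity, whose
right-hand side equals `(πλβ)² K / (u J) > 0`.
-/

open Real MeasureTheory Set Filter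

noncomputable def halfGaussLaplace (c u : ℝ) : ℝ :=
  ∫ r in Ioi (0 : ℝ), exp (-(u * r) - c * r ^ 2)

noncomputable def halfGaussLaplaceMoment (c u : ℝ) : ℝ :=
  ∫ r in Ioi (0 : ℝ), r * exp (-(u * r) - c * r ^ 2)

lemma setIntegral_pos_of_forall_pos {X : Type*} [MeasurableSpace X] {μ : Measure X} {s : Set X}
    {f : X → ℝ} (hs : MeasurableSet s) (hμs : 0 < μ s) (hf : IntegrableOn f s μ)
    (hpos : ∀ x ∈ s, 0 < f x) : 0 < ∫ x in s, f x ∂μ := by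
  rw [setIntegral_pos_iff_support_of_nonneg_ae ((ae_restrict_iff' hs).mpr
    (Eventually.of_forall fun x hx => (hpos x hx).le)) hf,
    inter_eq_right.mpr fun x hx => Function.mem_support.mpr (hpos x hx).ne']
  exact hμs

section HalfGaussLaplace

variable {c : ℝ}

lemma neg_mul_sub_mul_sq_le (hc : 0 < c) (u r : ℝ) :
    -(u * r) - c * r ^ 2 ≤ u ^ 2 / (2 * c) - c / 2 * r ^ 2 := by
  have h : u ^ 2 / (2 * c) - c / 2 * r ^ 2 - (-(u * r) - c * r ^ 2) =
      (u + c * r) ^ 2 / (2 * c) := by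
    field_simp; ring
  linarith [show 0 ≤ (u + c * r) ^ 2 / (2 * c) by positivity]

lemma integrable_exp_neg_mul_sub_mul_sq (hc : 0 < c) (u : ℝ) :
    Integrable fun r : ℝ => exp (-(u * r) - c * r ^ 2) := by
  refine ((integrable_exp_neg_mul_sq (half_pos hc)).const_mul (exp (u ^ 2 / (2 * c)))).mono'
    (by fun_prop) (Eventually.of_forall fun r => ?_)
  rw [norm_of_nonneg (exp_pos _).le, ← exp_add, neg_mul, ← sub_eq_add_neg]
  exact exp_le_exp.mpr (neg_mul_sub_mul_sq_le hc u r)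

lemma integrable_mul_exp_neg_mul_sub_mul_sq (hc : 0 < c) (u : ℝ) :
    Integrable fun r : ℝ => r * exp (-(u * r) - c * r ^ 2) := by
  refine ((integrable_mul_exp_neg_mul_sq (half_pos hc)).norm.const_mul
    (exp (u ^ 2 / (2 * c)))).mono' (by fun_prop) (Eventually.of_forall fun r => ?_)
  rw [norm_mul, norm_mul, norm_of_nonneg (exp_pos _).le, norm_of_nonneg (exp_pos _).le,
    mul_left_comm, ← exp_add, neg_mul, ← sub_eq_add_neg]
  exact mul_le_mul_of_nonneg_left (exp_le_exp.mpr (neg_mul_sub_mul_sq_le hc u r)) (norm_nonneg r)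

lemma tendsto_exp_neg_mul_sub_mul_sq_atTop (hc : 0 < c) (u : ℝ) :
    Tendsto (fun r : ℝ => exp (-(u * r) - c * r ^ 2)) atTop (nhds 0) := by
  refine tendsto_exp_atBot.comp (tendsto_atBot_mono (neg_mul_sub_mul_sq_le hc u) ?_)
  exact tendsto_atBot_add_const_left _ _ (tendsto_neg_atTop_atBot.comp
    ((tendsto_pow_atTop two_ne_zero).const_mul_atTop (half_pos hc)))

lemma halfGaussLaplace_pos (hc : 0 < c) (u : ℝ) : 0 < halfGaussLaplace c u :=
  setIntegral_pos_of_forall_pos measurableSet_Ioi (by simp)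
    (integrable_exp_neg_mul_sub_mul_sq hc u).integrableOn fun _ _ => exp_pos _

lemma halfGaussLaplaceMoment_pos (hc : 0 < c) (u : ℝ) : 0 < halfGaussLaplaceMoment c u :=
  setIntegral_pos_of_forall_pos measurableSet_Ioi (by simp)
    (integrable_mul_exp_neg_mul_sub_mul_sq hc u).integrableOn fun _ hr => mul_pos hr (exp_pos _)

lemma mul_halfGaussLaplace_add_mul_halfGaussLaplaceMoment (hc : 0 < c) (u : ℝ) :
    u * halfGaussLaplace c u + 2 * c * halfGaussLaplaceMoment c u = 1 := by
  have hderiv (r : ℝ) : HasDerivAt (fun r => -exp (-(u * r) - c * r ^ 2))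
      (u * exp (-(u * r) - c * r ^ 2) + 2 * c * (r * exp (-(u * r) - c * r ^ 2))) r := by
    have := (((hasDerivAt_id r).const_mul u).neg.sub ((hasDerivAt_pow 2 r).const_mul c)).exp.neg
    exact this.congr_deriv (by simp; ring)
  have hint₁ := ((integrable_exp_neg_mul_sub_mul_sq hc u).const_mul u).integrableOn (s := Ioi 0)
  have hint₂ :=
    ((integrable_mul_exp_neg_mul_sub_mul_sq hc u).const_mul (2 * c)).integrableOn (s := Ioi 0)
  have := integral_Ioi_of_hasDerivAt_of_tendsto' (fun r _ => hderiv r) (hint₁.add hint₂)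
    (by simpa using (tendsto_exp_neg_mul_sub_mul_sq_atTop hc u).neg)
  rw [integral_add hint₁ hint₂, integral_const_mul, integral_const_mul] at this
  simpa [halfGaussLaplace, halfGaussLaplaceMoment] using this

lemma hasDerivAt_halfGaussLaplace (hc : 0 < c) (u : ℝ) :
    HasDerivAt (halfGaussLaplace c) (-halfGaussLaplaceMoment c u) u := by
  have hF' (r v : ℝ) : HasDerivAt (fun v => exp (-(v * r) - c * r ^ 2))
      (-(r * exp (-(v * r) - c * r ^ 2))) v :=
    (((hasDerivAt_id v).mul_const r).neg.sub_const (c * r ^ 2)).exp.congr_deriv (by simp; ring)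
  have hbound : ∀ᵐ r ∂volume.restrict (Ioi 0), ∀ v ∈ Metric.ball u 1,
      ‖-(r * exp (-(v * r) - c * r ^ 2))‖ ≤ r * exp (-((u - 1) * r) - c * r ^ 2) := by
    refine (ae_restrict_iff' measurableSet_Ioi).mpr (Eventually.of_forall fun r hr v hv => ?_)
    have hr : 0 < r := hr
    have hv : u - 1 < v := by linarith [(abs_lt.mp (Metric.mem_ball.mp hv)).1]
    rw [norm_neg, norm_of_nonneg (by positivity)]
    gcongr
  have key := hasDerivAt_integral_of_dominated_loc_of_deriv_le (μ := volume.restrict (Ioi 0))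
    (F := fun v r => exp (-(v * r) - c * r ^ 2)) (Metric.ball_mem_nhds u one_pos)
    (Eventually.of_forall fun v => (by fun_prop))
    (integrable_exp_neg_mul_sub_mul_sq hc u).integrableOn (by fun_prop) hbound
    (integrable_mul_exp_neg_mul_sub_mul_sq hc (u - 1)).integrableOn
    (Eventually.of_forall fun r v _ => hF' r v)
  rw [integral_neg] at key
  exact key.2

lemma hasDerivAt_mul_halfGaussLaplace_mul (hc : 0 < c) (s b x : ℝ) :
    HasDerivAt (fun γ => s * γ * halfGaussLaplace c (s * γ * b))
      (s * (halfGaussLaplace c (s * x * b) -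
        s * x * b * halfGaussLaplaceMoment c (s * x * b))) x := by
  have hlin : HasDerivAt (fun γ => s * γ) s x := by simpa using (hasDerivAt_id x).const_mul s
  have hJ : HasDerivAt (fun γ => halfGaussLaplace c (s * γ * b))
      (-halfGaussLaplaceMoment c (s * x * b) * (s * b)) x := by
    have hJ₀ := hasDerivAt_halfGaussLaplace hc (s * x * b)
    exact hJ₀.comp x (hlin.mul_const b)
  exact (hlin.mul hJ).congr_deriv (by ring)

end HalfGaussLaplace

lemma eq_mul_deriv_of_hasDerivAt_mul_sub_eq_zero {p : ℝ → ℝ} {p' lam a γ : ℝ} (hlam : lam ≠ 0)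
    (hp : HasDerivAt p p' γ) (hcrit : HasDerivAt (fun γ => lam * (a - γ) * p γ) 0 γ) :
    p γ = (a - γ) * p' := by
  have h0 := (((hasDerivAt_id' γ).const_sub a).const_mul lam).mul hp |>.unique hcrit
  refine mul_left_cancel₀ hlam ?_
  linear_combination -h0

lemma one_le_one_add_sqrt_mul_arctan_sqrt (T : ℝ) : 1 ≤ 1 + √T * arctan √T :=
  le_add_of_nonneg_right (mul_nonneg (sqrt_nonneg T) (arctan_nonneg.mpr (sqrt_nonneg T)))

theorem critical_point_identity_alpha_four_general
    (lam μ T σ2 a γ₁ : ℝ)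
    (hlam : 0 < lam) (hμ : 0 < μ) (hT : 0 < T) (hσ2 : 0 < σ2)
    (β : ℝ) (hβ : β = 1 + Real.sqrt T * Real.arctan (Real.sqrt T))
    (p f : ℝ → ℝ)
    (hp : ∀ γ, p γ = π * lam * γ * ∫ r in Ioi (0:ℝ),
      Real.exp (-(π * lam * γ * β * r) - μ * T * σ2 * r ^ 2))
    (hf : ∀ γ, f γ = lam * (a - γ) * p γ)
    (hγ₁ : γ₁ ∈ Ioo 0 a)
    (hcrit : HasDerivAt f 0 γ₁) :
    (1 / γ₁) * (1 / γ₁ - 1 / (a - γ₁)) =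
      ((π * lam) ^ 2 * β ^ 2 / (2 * μ * T * σ2)) * (1 / (β * p γ₁) - 1) ∧
    0 < ((π * lam) ^ 2 * β ^ 2 / (2 * μ * T * σ2)) * (1 / (β * p γ₁) - 1) := by
  obtain ⟨hγ0, hγa⟩ := hγ₁
  set c := μ * T * σ2
  have hc : 0 < c := by positivity
  have hβ0 : 0 < β := hβ ▸ one_pos.trans_le (one_le_one_add_sqrt_mul_arctan_sqrt T)
  set u := π * lam * γ₁ * β
  have hu : 0 < u := by positivity
  set J := halfGaussLaplace c u
  set K := halfGaussLaplaceMoment c u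
  have hp' : p = fun γ => π * lam * γ * halfGaussLaplace c (π * lam * γ * β) := funext hp
  have hpγ₁ : p γ₁ = π * lam * γ₁ * J := by rw [hp']
  have hcrit' : p γ₁ = (a - γ₁) * (π * lam * (J - u * K)) :=
    eq_mul_deriv_of_hasDerivAt_mul_sub_eq_zero hlam.ne'
      (hp' ▸ hasDerivAt_mul_halfGaussLaplace_mul hc (π * lam) β γ₁) (funext hf ▸ hcrit)
  rw [hpγ₁] at hcrit'
  have hbyparts : u * J + 2 * c * K = 1 :=
    mul_halfGaussLaplace_add_mul_halfGaussLaplaceMoment hc u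
  have hJ : 0 < J := halfGaussLaplace_pos hc u
  have hK : 0 < K := halfGaussLaplaceMoment_pos hc u
  have hrhs : 1 / (β * p γ₁) - 1 = 2 * c * K / (u * J) := by
    rw [hpγ₁, show β * (π * lam * γ₁ * J) = u * J by ring]
    field_simp
    linarith
  rw [hrhs]
  refine ⟨?_, by positivity⟩
  field_simp
  linear_combination (-(c * γ₁ * β)) * hcrit'

/-- For path-loss exponent `α = 4` with `β = 1 + √T·arctan √T`, any critical
point `γ₁ ∈ (0,a)` of `f(γ) = λ(a−γ)·p(γ)` satisfies
`(1/γ₁)(1/γ₁ − 1/(a−γ₁)) = ((πλ)²β²/(2μTσ²))·(1/(β·p(γ₁)) − 1)`, and the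
right-hand side is strictly positive. -/
theorem critical_point_identity_alpha_four
    (lam μ T σ2 a γ₁ : ℝ)
    (hlam : 0 < lam) (hμ : 0 < μ) (hT : 0 < T) (hσ2 : 0 < σ2)
    (ha : 0 < a) (ha1 : a ≤ 1)
    (β : ℝ) (hβ : β = 1 + Real.sqrt T * Real.arctan (Real.sqrt T))
    (p f : ℝ → ℝ)
    (hp : ∀ γ, p γ = π * lam * γ * ∫ r in Ioi (0:ℝ),
      Real.exp (-(π * lam * γ * β * r) - μ * T * σ2 * r ^ 2))
    (hf : ∀ γ, f γ = lam * (a - γ) * p γ)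
    (hγ₁ : γ₁ ∈ Ioo 0 a)
    (hcrit : HasDerivAt f 0 γ₁) :
    (1 / γ₁) * (1 / γ₁ - 1 / (a - γ₁)) =
      ((π * lam) ^ 2 * β ^ 2 / (2 * μ * T * σ2)) * (1 / (β * p γ₁) - 1) ∧
    0 < ((π * lam) ^ 2 * β ^ 2 / (2 * μ * T * σ2)) * (1 / (β * p γ₁) - 1) :=
  critical_point_identity_alpha_four_general lam μ T σ2 a γ₁ hlam hμ hT hσ2 β hβ p f hp hf hγ₁ hcrit
end

section
/- Let λ, β > 0, α > 2 and c > 0. For s ≥ 0 define F(s) = πλ ∫₀^∞ exp(−πλβr − c·s·r^{α/2}) dr. Then F admits the first-order expansion F(s) = 1/β − c·s·Γ(1 + α/2)·(πλ)^{−α/2}·β^{−(α/2+1)} + o(s) as s → 0⁺; equivalently, lim_{s→0⁺} (F(s) − 1/β)/s = −c·Γ(1 + α/2)·(πλ)^{−α/2}·β^{−(α/2+1)}, where Γ denotes the Gamma function. -/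
/-!
With `a = πλβ` and `p = α/2` the integrand factors as `e^{-ar} · e^{-s·c r^p}`, and
`πλ ∫₀^∞ e^{-ar} dr = πλ/a = 1/β`. Hence
`(F(s) - 1/β)/s = πλ ∫ e^{-ar} (e^{-s·c r^p} - 1)/s dr`. Since `0 ≤ 1 - e^{-x} ≤ x` for
`x ≥ 0`, the integrand is dominated by `c r^p e^{-ar}`, and dominated convergence yields the
limit `-πλ c ∫ r^p e^{-ar} dr = -πλ c Γ(p+1) a^{-(p+1)}`.
-/

open Real MeasureTheory Set Filter Topology

lemma abs_exp_neg_mul_sub_one_div_le {s x : ℝ} (hs : 0 < s) (hx : 0 ≤ x) :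
    |(exp (-(s * x)) - 1) / s| ≤ x := by
  have hle : exp (-(s * x)) ≤ 1 := exp_le_one_iff.2 (by nlinarith)
  rw [abs_div, abs_of_nonpos (by linarith), abs_of_pos hs, div_le_iff₀ hs]
  linarith [one_sub_le_exp_neg (s * x)]

lemma tendsto_exp_neg_mul_sub_one_div (x : ℝ) :
    Tendsto (fun s => (exp (-(s * x)) - 1) / s) (𝓝[>] 0) (𝓝 (-x)) := by
  have hderiv : HasDerivAt (fun s => exp (-(s * x))) (-x) 0 := by
    simpa using ((hasDerivAt_id (0 : ℝ)).mul_const x).neg.exp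
  refine hderiv.tendsto_slope_zero_right.congr fun s => ?_
  simp [div_eq_inv_mul]

section

variable {α : Type*} [MeasurableSpace α] {μ : Measure α} {f g : α → ℝ}

lemma MeasureTheory.Integrable.mul_exp_neg_mul (hf : Integrable f μ)
    (hg : AEStronglyMeasurable g μ) (hg0 : 0 ≤ᵐ[μ] g) {s : ℝ} (hs : 0 ≤ s) :
    Integrable (fun x => f x * exp (-(s * g x))) μ := by
  refine hf.mul_bdd (c := 1) (continuous_exp.comp_aestronglyMeasurable (hg.const_mul s).neg) ?_
  filter_upwards [hg0] with x hx
  rw [norm_of_nonneg (exp_pos _).le, exp_le_one_iff]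
  exact neg_nonpos.2 (mul_nonneg hs hx)

theorem tendsto_integral_mul_exp_neg_mul_sub_div (hf : Integrable f μ)
    (hfg : Integrable (fun x => f x * g x) μ) (hg : AEStronglyMeasurable g μ)
    (hg0 : 0 ≤ᵐ[μ] g) :
    Tendsto (fun s => (∫ x, f x * exp (-(s * g x)) ∂μ - ∫ x, f x ∂μ) / s) (𝓝[>] 0)
      (𝓝 (-∫ x, f x * g x ∂μ)) := by
  have hquot : ∀ᶠ s in 𝓝[>] (0 : ℝ), ∫ x, f x * ((exp (-(s * g x)) - 1) / s) ∂μ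
      = (∫ x, f x * exp (-(s * g x)) ∂μ - ∫ x, f x ∂μ) / s := by
    filter_upwards [self_mem_nhdsWithin] with s hs
    rw [← integral_sub (hf.mul_exp_neg_mul hg hg0 (le_of_lt hs)) hf, ← integral_div]
    congr 1 with x
    ring
  rw [← integral_neg]
  refine (tendsto_integral_filter_of_dominated_convergence (fun x => |f x * g x|) ?_ ?_
    hfg.abs ?_).congr' hquot
  · filter_upwards [self_mem_nhdsWithin] with s _
    exact hf.1.mul (by fun_prop)
  · filter_upwards [self_mem_nhdsWithin] with s hs
    filter_upwards [hg0] with x hx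
    rw [norm_mul, Real.norm_eq_abs, abs_mul]
    exact mul_le_mul_of_nonneg_left
      ((abs_exp_neg_mul_sub_one_div_le hs hx).trans (le_abs_self _)) (abs_nonneg _)
  · refine ae_of_all _ fun x => ?_
    simpa using (tendsto_exp_neg_mul_sub_one_div (g x)).const_mul (f x)

end

lemma integral_exp_neg_mul_Ioi {a : ℝ} (ha : 0 < a) :
    ∫ r in Ioi (0 : ℝ), exp (-(a * r)) = a⁻¹ := by
  simpa using integral_rpow_mul_exp_neg_mul_Ioi one_pos ha

lemma integral_exp_neg_mul_mul_rpow_Ioi {a p : ℝ} (ha : 0 < a) (hp : -1 < p) :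
    ∫ r in Ioi (0 : ℝ), exp (-(a * r)) * r ^ p = Gamma (p + 1) * a ^ (-(p + 1)) := by
  have h := integral_rpow_mul_exp_neg_mul_Ioi (a := p + 1) (by linarith) ha
  simp only [add_sub_cancel_right, one_div, inv_rpow ha.le, ← rpow_neg ha.le] at h
  simp only [mul_comm (exp _), h, mul_comm (Gamma _)]

lemma integrableOn_exp_neg_mul_Ioi {a : ℝ} (ha : 0 < a) :
    IntegrableOn (fun r => exp (-(a * r))) (Ioi 0) := by
  simpa only [neg_mul] using exp_neg_integrableOn_Ioi 0 ha

lemma integrableOn_exp_neg_mul_mul_rpow_Ioi {a p : ℝ} (ha : 0 < a) (hp : -1 < p) :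
    IntegrableOn (fun r => exp (-(a * r)) * r ^ p) (Ioi 0) := by
  have hΓ : 0 < Gamma (p + 1) := Gamma_pos_of_pos (by linarith)
  exact Integrable.of_integral_ne_zero
    (by rw [integral_exp_neg_mul_mul_rpow_Ioi ha hp]; positivity)

/-- Small-noise expansion of the coverage probability:
`F(s) = πλ ∫₀^∞ exp(−πλβr − c·s·r^{α/2}) dr` satisfies
`(F(s) − 1/β)/s → −c·Γ(1+α/2)·(πλ)^{−α/2}·β^{−(α/2+1)}` as `s → 0⁺`. -/
theorem coverage_small_noise_expansion
    (lam β α c : ℝ) (hlam : 0 < lam) (hβ : 0 < β) (hα : 2 < α) (hc : 0 < c)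
    (F : ℝ → ℝ)
    (hF : ∀ s, 0 ≤ s → F s = π * lam * ∫ r in Ioi (0:ℝ),
      Real.exp (-(π * lam * β * r) - c * s * r ^ (α / 2))) :
    Tendsto (fun s => (F s - 1 / β) / s) (nhdsWithin 0 (Ioi 0))
      (nhds (-(c * Real.Gamma (1 + α / 2) * (π * lam) ^ (-(α / 2)) *
        β ^ (-(α / 2 + 1))))) := by
  set p := α / 2
  have hpl : 0 < π * lam := mul_pos pi_pos hlam
  have ha : 0 < π * lam * β := mul_pos hpl hβ
  have hp : -1 < p := by simp only [p]; linarith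
  have hfg : IntegrableOn (fun r => exp (-(π * lam * β * r)) * (c * r ^ p)) (Ioi 0) := by
    simpa only [IntegrableOn, mul_left_comm _ c] using
      (integrableOn_exp_neg_mul_mul_rpow_Ioi ha hp).const_mul c
  have hg : 0 ≤ᵐ[volume.restrict (Ioi 0)] fun r : ℝ => c * r ^ p :=
    (ae_restrict_mem measurableSet_Ioi).mono fun r (hr : 0 < r) => by positivity
  have hlim := (tendsto_integral_mul_exp_neg_mul_sub_div
    (integrableOn_exp_neg_mul_Ioi ha) hfg (by fun_prop) hg).const_mul (π * lam)
  have hval : π * lam * -∫ r in Ioi 0, exp (-(π * lam * β * r)) * (c * r ^ p)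
      = -(c * Gamma (1 + p) * (π * lam) ^ (-p) * β ^ (-(p + 1))) := by
    simp only [mul_left_comm _ c, integral_const_mul, integral_exp_neg_mul_mul_rpow_Ioi ha hp,
      mul_rpow hpl.le hβ.le]
    have hsplit : (π * lam) ^ (-p) = π * lam * (π * lam) ^ (-(p + 1)) := by
      rw [show -p = 1 + -(p + 1) by ring, rpow_add hpl, rpow_one]
    rw [hsplit, add_comm 1 p]
    ring
  rw [← hval]
  refine hlim.congr' ?_
  filter_upwards [self_mem_nhdsWithin] with s hs
  have hexp : ∀ r, exp (-(π * lam * β * r) - c * s * r ^ p)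
      = exp (-(π * lam * β * r)) * exp (-(s * (c * r ^ p))) := fun r => by
    rw [← exp_add]; ring_nf
  simp only [hF s (le_of_lt hs), hexp, integral_exp_neg_mul_Ioi ha]
  field_simp
end

section
/- Let M ≥ 1 be an integer, γ_r ≥ 0 and α > 2. Set γ_c = γ_r/(α/2 + 1) and x*_i = i^{−γ_c} / ∑_{j=1}^M j^{−γ_c} for i = 1, …, M. Then for every x ∈ ℝ^M with x_i > 0 for all i and ∑_{i=1}^M x_i = 1, one has ∑_{i=1}^M i^{−γ_r}·x_i^{−α/2} ≥ ∑_{i=1}^M i^{−γ_r}·(x*_i)^{−α/2}, with equality if and only if x = x*. In other words, when the request distribution is Zipf with exponent γ_r, the caching distribution minimizing the small-noise penalty term is Zipf with exponent γ_c = γ_r/(α/2+1). -/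
/-!
Write `c i = i ^ (-γc)` and `β = α / 2`. Then the request weights are `i ^ (-γr) = c i ^ (β + 1)`
and `x* = c / ∑ c`. For positive `x, y`, Bernoulli's inequality with exponent `β + 1` applied to
`y / x` gives the tangent bound `y ^ (β + 1) * x ^ (-β) ≥ (β + 1) * y - β * x`, strict unless
`x = y`. Summed over two probability vectors this yields `∑ y i ^ (β + 1) * x i ^ (-β) ≥ 1`, with
equality iff `x = y`; after factoring out `(∑ c) ^ (β + 1)` the objective is this sum for `y = x*`.
-/

open Real Finset

namespace Real

variable {β x y : ℝ}

lemma rpow_add_one_mul_rpow_neg_eq_mul_div_rpow (hx : 0 < x) (hy : 0 ≤ y) :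
    y ^ (β + 1) * x ^ (-β) = x * (y / x) ^ (β + 1) := by
  rw [div_rpow hy hx.le, rpow_add_one hx.ne', rpow_neg hx.le]
  have : 0 < x ^ β := rpow_pos_of_pos hx β
  field_simp

lemma rpow_add_one_mul_rpow_neg_self (hy : 0 < y) : y ^ (β + 1) * y ^ (-β) = y := by
  rw [← rpow_add hy]
  simp

lemma add_one_mul_sub_mul_lt_rpow_add_one_mul_rpow_neg (hβ : 0 < β) (hx : 0 < x) (hy : 0 < y)
    (hxy : x ≠ y) : (β + 1) * y - β * x < y ^ (β + 1) * x ^ (-β) := by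
  have hs : y / x - 1 ≠ 0 := sub_ne_zero.2 (div_ne_one_of_ne hxy.symm)
  have hbern := one_add_mul_self_lt_rpow_one_add (by linarith [div_pos hy hx]) hs
    (show 1 < β + 1 by linarith)
  rw [add_sub_cancel] at hbern
  calc (β + 1) * y - β * x = x * (1 + (β + 1) * (y / x - 1)) := by field_simp; ring
    _ < x * (y / x) ^ (β + 1) := mul_lt_mul_of_pos_left hbern hx
    _ = y ^ (β + 1) * x ^ (-β) := (rpow_add_one_mul_rpow_neg_eq_mul_div_rpow hx hy.le).symm

lemma add_one_mul_sub_mul_le_rpow_add_one_mul_rpow_neg (hβ : 0 < β) (hx : 0 < x) (hy : 0 < y) :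
    (β + 1) * y - β * x ≤ y ^ (β + 1) * x ^ (-β) := by
  rcases eq_or_ne x y with rfl | hxy
  · rw [rpow_add_one_mul_rpow_neg_self hx]
    linarith
  · exact (add_one_mul_sub_mul_lt_rpow_add_one_mul_rpow_neg hβ hx hy hxy).le

end Real

section Simplex

variable {ι : Type*} [Fintype ι] {β : ℝ} {x y c : ι → ℝ}

lemma sum_add_one_mul_sub_mul_eq_one (hxs : ∑ i, x i = 1) (hys : ∑ i, y i = 1) :
    ∑ i, ((β + 1) * y i - β * x i) = 1 := by
  rw [sum_sub_distrib, ← mul_sum, ← mul_sum, hxs, hys]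
  ring

lemma one_le_sum_rpow_add_one_mul_rpow_neg (hβ : 0 < β) (hx : ∀ i, 0 < x i) (hy : ∀ i, 0 < y i)
    (hxs : ∑ i, x i = 1) (hys : ∑ i, y i = 1) : 1 ≤ ∑ i, y i ^ (β + 1) * x i ^ (-β) := by
  refine (sum_add_one_mul_sub_mul_eq_one (β := β) hxs hys).symm.trans_le ?_
  exact sum_le_sum fun i _ => add_one_mul_sub_mul_le_rpow_add_one_mul_rpow_neg hβ (hx i) (hy i)

lemma one_lt_sum_rpow_add_one_mul_rpow_neg (hβ : 0 < β) (hx : ∀ i, 0 < x i) (hy : ∀ i, 0 < y i)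
    (hxs : ∑ i, x i = 1) (hys : ∑ i, y i = 1) (hxy : x ≠ y) :
    1 < ∑ i, y i ^ (β + 1) * x i ^ (-β) := by
  obtain ⟨j, hj⟩ := Function.ne_iff.1 hxy
  refine (sum_add_one_mul_sub_mul_eq_one (β := β) hxs hys).symm.trans_lt ?_
  exact sum_lt_sum (fun i _ => add_one_mul_sub_mul_le_rpow_add_one_mul_rpow_neg hβ (hx i) (hy i))
    ⟨j, mem_univ j, add_one_mul_sub_mul_lt_rpow_add_one_mul_rpow_neg hβ (hx j) (hy j) hj⟩

lemma sum_rpow_add_one_mul_rpow_neg_eq_one_iff (hβ : 0 < β) (hx : ∀ i, 0 < x i)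
    (hy : ∀ i, 0 < y i) (hxs : ∑ i, x i = 1) (hys : ∑ i, y i = 1) :
    ∑ i, y i ^ (β + 1) * x i ^ (-β) = 1 ↔ x = y := by
  refine ⟨fun h => ?_, ?_⟩
  · by_contra hxy
    exact (one_lt_sum_rpow_add_one_mul_rpow_neg hβ hx hy hxs hys hxy).ne' h
  · rintro rfl
    simp only [rpow_add_one_mul_rpow_neg_self (hx _), hxs]

lemma sum_rpow_add_one_mul_rpow_neg_eq_mul_sum_div (hc : ∀ i, 0 < c i) (x : ι → ℝ) :
    ∑ i, c i ^ (β + 1) * x i ^ (-β) =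
      (∑ j, c j) ^ (β + 1) * ∑ i, (c i / ∑ j, c j) ^ (β + 1) * x i ^ (-β) := by
  rw [mul_sum]
  refine sum_congr rfl fun i _ => ?_
  have hS : 0 < ∑ j, c j := sum_pos (fun j _ => hc j) ⟨i, mem_univ i⟩
  rw [div_rpow (hc i).le hS.le, ← mul_assoc, mul_div_cancel₀ _ (rpow_pos_of_pos hS _).ne']

lemma sum_div_sum_eq_one [Nonempty ι] (hc : ∀ i, 0 < c i) : ∑ i, c i / ∑ j, c j = 1 := by
  rw [← sum_div, div_self (sum_pos (fun j _ => hc j) univ_nonempty).ne']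

lemma sum_rpow_add_one_mul_rpow_neg_div_sum_self [Nonempty ι] (hc : ∀ i, 0 < c i) :
    ∑ i, c i ^ (β + 1) * (c i / ∑ j, c j) ^ (-β) = (∑ j, c j) ^ (β + 1) := by
  have hy i : 0 < c i / ∑ j, c j := div_pos (hc i) (sum_pos (fun j _ => hc j) univ_nonempty)
  rw [sum_rpow_add_one_mul_rpow_neg_eq_mul_sum_div hc]
  simp only [rpow_add_one_mul_rpow_neg_self (hy _), sum_div_sum_eq_one hc, mul_one]

theorem sum_rpow_add_one_mul_rpow_neg_div_sum_le (hβ : 0 < β) (hc : ∀ i, 0 < c i)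
    (hx : ∀ i, 0 < x i) (hxs : ∑ i, x i = 1) :
    ∑ i, c i ^ (β + 1) * (c i / ∑ j, c j) ^ (-β) ≤ ∑ i, c i ^ (β + 1) * x i ^ (-β) := by
  have : Nonempty ι := univ_nonempty_iff.1 (nonempty_of_sum_ne_zero (hxs ▸ one_ne_zero))
  have hS : 0 < ∑ j, c j := sum_pos (fun j _ => hc j) univ_nonempty
  rw [sum_rpow_add_one_mul_rpow_neg_div_sum_self hc,
    sum_rpow_add_one_mul_rpow_neg_eq_mul_sum_div hc]
  exact le_mul_of_one_le_right (rpow_pos_of_pos hS _).le <|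
    one_le_sum_rpow_add_one_mul_rpow_neg hβ hx (fun i => div_pos (hc i) hS) hxs
      (sum_div_sum_eq_one hc)

theorem sum_rpow_add_one_mul_rpow_neg_eq_div_sum_iff (hβ : 0 < β) (hc : ∀ i, 0 < c i)
    (hx : ∀ i, 0 < x i) (hxs : ∑ i, x i = 1) :
    ∑ i, c i ^ (β + 1) * x i ^ (-β) = ∑ i, c i ^ (β + 1) * (c i / ∑ j, c j) ^ (-β) ↔
      x = fun i => c i / ∑ j, c j := by
  have : Nonempty ι := univ_nonempty_iff.1 (nonempty_of_sum_ne_zero (hxs ▸ one_ne_zero))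
  have hS : 0 < ∑ j, c j := sum_pos (fun j _ => hc j) univ_nonempty
  rw [sum_rpow_add_one_mul_rpow_neg_div_sum_self hc,
    sum_rpow_add_one_mul_rpow_neg_eq_mul_sum_div hc, mul_eq_left₀ (rpow_pos_of_pos hS _).ne']
  exact sum_rpow_add_one_mul_rpow_neg_eq_one_iff hβ hx (fun i => div_pos (hc i) hS) hxs
    (sum_div_sum_eq_one hc)

end Simplex

theorem zipf_caching_optimal_small_noise_general
    (M : ℕ) (γr α : ℝ) (hα : 2 < α)
    (γc : ℝ) (hγc : γc = γr / (α / 2 + 1))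
    (xstar : Fin M → ℝ)
    (hxstar : ∀ i, xstar i = ((i : ℕ) + 1 : ℝ) ^ (-γc) /
      ∑ j : Fin M, ((j : ℕ) + 1 : ℝ) ^ (-γc))
    (x : Fin M → ℝ) (hx : ∀ i, 0 < x i) (hsum : ∑ i, x i = 1) :
    (∑ i : Fin M, ((i : ℕ) + 1 : ℝ) ^ (-γr) * xstar i ^ (-(α / 2)) ≤
      ∑ i : Fin M, ((i : ℕ) + 1 : ℝ) ^ (-γr) * x i ^ (-(α / 2))) ∧
    ((∑ i : Fin M, ((i : ℕ) + 1 : ℝ) ^ (-γr) * x i ^ (-(α / 2)) =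
      ∑ i : Fin M, ((i : ℕ) + 1 : ℝ) ^ (-γr) * xstar i ^ (-(α / 2))) ↔
      x = xstar) := by
  set c : Fin M → ℝ := fun i => ((i : ℕ) + 1 : ℝ) ^ (-γc)
  have hc i : 0 < c i := rpow_pos_of_pos (by positivity) _
  have hrequest (i : Fin M) : ((i : ℕ) + 1 : ℝ) ^ (-γr) = c i ^ (α / 2 + 1) := by
    rw [← rpow_mul (by positivity), hγc]
    field_simp
  have hxstar' : xstar = fun i => c i / ∑ j, c j := funext hxstar
  have hβ : 0 < α / 2 := by linarith
  simp only [hrequest, hxstar']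
  exact ⟨sum_rpow_add_one_mul_rpow_neg_div_sum_le hβ hc hx hsum,
    sum_rpow_add_one_mul_rpow_neg_eq_div_sum_iff hβ hc hx hsum⟩

/-- For Zipf requests with exponent `γ_r`, the Zipf distribution with exponent
`γ_c = γ_r/(α/2+1)` is the unique minimizer of the small-noise penalty term
`∑ i^{−γ_r}·x_i^{−α/2}` over probability vectors `x` with positive entries. -/
theorem zipf_caching_optimal_small_noise
    (M : ℕ) (hM : 1 ≤ M) (γr α : ℝ) (hγr : 0 ≤ γr) (hα : 2 < α)
    (γc : ℝ) (hγc : γc = γr / (α / 2 + 1))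
    (xstar : Fin M → ℝ)
    (hxstar : ∀ i, xstar i = ((i : ℕ) + 1 : ℝ) ^ (-γc) /
      ∑ j : Fin M, ((j : ℕ) + 1 : ℝ) ^ (-γc))
    (x : Fin M → ℝ) (hx : ∀ i, 0 < x i) (hsum : ∑ i, x i = 1) :
    (∑ i : Fin M, ((i : ℕ) + 1 : ℝ) ^ (-γr) * xstar i ^ (-(α / 2)) ≤
      ∑ i : Fin M, ((i : ℕ) + 1 : ℝ) ^ (-γr) * x i ^ (-(α / 2))) ∧
    ((∑ i : Fin M, ((i : ℕ) + 1 : ℝ) ^ (-γr) * x i ^ (-(α / 2)) =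
      ∑ i : Fin M, ((i : ℕ) + 1 : ℝ) ^ (-γr) * xstar i ^ (-(α / 2))) ↔
      x = xstar) :=
  zipf_caching_optimal_small_noise_general M γr α hα γc hγc xstar hxstar x hx hsum
end

section
/- Let M ≥ 1 be an integer, α > 2, p ∈ (0,1), and let the request pmf be truncated geometric: q_i = (1−p)^{i−1}·p / ∑_{j=1}^M (1−p)^{j−1}·p for i = 1, …, M. Set q̃ = 1 − (1−p)^{1/(α/2+1)}. Then the unique minimizer of x ↦ ∑_{i=1}^M q_i·x_i^{−α/2} over probability vectors x ∈ ℝ^M with x_i > 0 and ∑ x_i = 1 is the truncated geometric pmf x*_i = (1−q̃)^{i−1} / ∑_{j=1}^M (1−q̃)^{j−1}. -/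
/-! The tangent line of `t ↦ t ^ (-s)` at `a > 0` lies strictly below it away from `a`:
`t ^ (-s) ≥ a ^ (-s) * (1 - s * (t / a - 1))`, which is `exp y ≥ 1 + y` combined with
`log u ≤ u - 1`. If a positive vector `y` with the same total mass as `x` satisfies the Lagrange
condition `w i * y i ^ (-s) = c * y i`, the linear parts of the weighted tangent inequalities
cancel in the sum, so `∑ w i * x i ^ (-s) ≥ ∑ w i * y i ^ (-s)` with equality only at `x = y`.
For geometric weights `w i ∝ ρ ^ i` the Lagrange condition holds for
`y i ∝ (ρ ^ (1 / (s + 1))) ^ i`; with `ρ = 1 - p` and `s = α / 2` this is the geometric pmf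
of ratio `1 - q̃`. -/

open Real Finset

namespace Real

lemma one_sub_mul_sub_one_le_rpow_neg {s u : ℝ} (hs : 0 ≤ s) (hu : 0 < u) :
    1 - s * (u - 1) ≤ u ^ (-s) := by
  have hlog := mul_le_mul_of_nonneg_left (log_le_sub_one_of_pos hu) hs
  rw [rpow_def_of_pos hu]
  linarith [add_one_le_exp (log u * -s)]

lemma one_sub_mul_sub_one_lt_rpow_neg {s u : ℝ} (hs : 0 < s) (hu : 0 < u) (hu1 : u ≠ 1) :
    1 - s * (u - 1) < u ^ (-s) := by
  have hlog := mul_lt_mul_of_pos_left (log_lt_sub_one_of_pos hu hu1) hs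
  rw [rpow_def_of_pos hu]
  linarith [add_one_le_exp (log u * -s)]

lemma rpow_neg_mul_one_sub_le {s a t : ℝ} (hs : 0 ≤ s) (ha : 0 < a) (ht : 0 < t) :
    a ^ (-s) * (1 - s * (t / a - 1)) ≤ t ^ (-s) := by
  calc a ^ (-s) * (1 - s * (t / a - 1))
      ≤ a ^ (-s) * (t / a) ^ (-s) :=
        mul_le_mul_of_nonneg_left (one_sub_mul_sub_one_le_rpow_neg hs (div_pos ht ha))
          (rpow_nonneg ha.le _)
    _ = t ^ (-s) := by rw [div_rpow ht.le ha.le, mul_div_cancel₀ _ (rpow_pos_of_pos ha _).ne']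

lemma rpow_neg_mul_one_sub_lt {s a t : ℝ} (hs : 0 < s) (ha : 0 < a) (ht : 0 < t) (hta : t ≠ a) :
    a ^ (-s) * (1 - s * (t / a - 1)) < t ^ (-s) := by
  have hta' : t / a ≠ 1 := by rwa [ne_eq, div_eq_one_iff_eq ha.ne']
  calc a ^ (-s) * (1 - s * (t / a - 1))
      < a ^ (-s) * (t / a) ^ (-s) :=
        mul_lt_mul_of_pos_left (one_sub_mul_sub_one_lt_rpow_neg hs (div_pos ht ha) hta')
          (rpow_pos_of_pos ha _)
    _ = t ^ (-s) := by rw [div_rpow ht.le ha.le, mul_div_cancel₀ _ (rpow_pos_of_pos ha _).ne']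

lemma geometric_mul_rpow_neg {r s A B : ℝ} (hr : 0 < r) (hB : 0 < B) (n : ℕ) :
    A * (r ^ (s + 1)) ^ n * (B * r ^ n) ^ (-s) = A * B ^ (-(s + 1)) * (B * r ^ n) := by
  have hrn : 0 < r ^ n := pow_pos hr n
  rw [← rpow_mul_natCast hr.le, mul_comm (s + 1), rpow_natCast_mul hr.le,
    mul_rpow hB.le hrn.le, rpow_add hrn, rpow_one, rpow_neg hB.le, rpow_neg hrn.le,
    rpow_neg hB.le, rpow_add hB, rpow_one]
  field_simp

end Real

section StationaryPoint

variable {ι : Type*} [Fintype ι] {s c : ℝ} {w x y : ι → ℝ}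

lemma sum_mul_tangent_rpow_neg_eq (hy : ∀ i, 0 < y i) (hxy : ∑ i, x i = ∑ i, y i)
    (hc : ∀ i, w i * y i ^ (-s) = c * y i) :
    ∑ i, w i * (y i ^ (-s) * (1 - s * (x i / y i - 1))) = ∑ i, w i * y i ^ (-s) := by
  have hterm : ∀ i, w i * (y i ^ (-s) * (1 - s * (x i / y i - 1))) =
      w i * y i ^ (-s) - s * c * (x i - y i) := fun i => by
    rw [← mul_assoc, hc i]
    field_simp [(hy i).ne']
  simp only [hterm, sum_sub_distrib, ← mul_sum, hxy, sub_self, mul_zero, sub_zero]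

theorem sum_mul_rpow_neg_le_of_stationary (hs : 0 ≤ s) (hw : ∀ i, 0 ≤ w i)
    (hx : ∀ i, 0 < x i) (hy : ∀ i, 0 < y i) (hxy : ∑ i, x i = ∑ i, y i)
    (hc : ∀ i, w i * y i ^ (-s) = c * y i) :
    ∑ i, w i * y i ^ (-s) ≤ ∑ i, w i * x i ^ (-s) := by
  rw [← sum_mul_tangent_rpow_neg_eq hy hxy hc]
  exact sum_le_sum fun i _ =>
    mul_le_mul_of_nonneg_left (rpow_neg_mul_one_sub_le hs (hy i) (hx i)) (hw i)

theorem sum_mul_rpow_neg_eq_iff_of_stationary (hs : 0 < s) (hw : ∀ i, 0 < w i)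
    (hx : ∀ i, 0 < x i) (hy : ∀ i, 0 < y i) (hxy : ∑ i, x i = ∑ i, y i)
    (hc : ∀ i, w i * y i ^ (-s) = c * y i) :
    ∑ i, w i * x i ^ (-s) = ∑ i, w i * y i ^ (-s) ↔ x = y := by
  refine ⟨fun h => ?_, fun h => h ▸ rfl⟩
  rw [← sum_mul_tangent_rpow_neg_eq hy hxy hc, eq_comm, sum_eq_sum_iff_of_le fun i _ =>
    mul_le_mul_of_nonneg_left (rpow_neg_mul_one_sub_le hs.le (hy i) (hx i)) (hw i).le] at h
  funext i
  by_contra hne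
  exact (mul_lt_mul_of_pos_left (rpow_neg_mul_one_sub_lt hs (hy i) (hx i) hne) (hw i)).ne
    (h i (mem_univ i))

end StationaryPoint

theorem geometric_caching_optimal_general
    (M : ℕ) (α : ℝ) (hα : 2 < α)
    (p : ℝ) (hp : p ∈ Set.Ioo (0:ℝ) 1)
    (q : Fin M → ℝ)
    (hq : ∀ i, q i = (1 - p) ^ (i : ℕ) * p /
      ∑ j : Fin M, (1 - p) ^ (j : ℕ) * p)
    (qt : ℝ) (hqt : qt = 1 - (1 - p) ^ (1 / (α / 2 + 1)))
    (xstar : Fin M → ℝ)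
    (hxstar : ∀ i, xstar i = (1 - qt) ^ (i : ℕ) /
      ∑ j : Fin M, (1 - qt) ^ (j : ℕ))
    (x : Fin M → ℝ) (hx : ∀ i, 0 < x i) (hsum : ∑ i, x i = 1) :
    (∑ i : Fin M, q i * xstar i ^ (-(α / 2)) ≤
      ∑ i : Fin M, q i * x i ^ (-(α / 2))) ∧
    ((∑ i : Fin M, q i * x i ^ (-(α / 2)) =
      ∑ i : Fin M, q i * xstar i ^ (-(α / 2))) ↔ x = xstar) := by
  obtain ⟨hp0, hp1⟩ := hp
  have h1p : 0 < 1 - p := sub_pos.2 hp1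
  have hs : 0 < α / 2 := by linarith
  set r := (1 - p) ^ (1 / (α / 2 + 1)) with hr_def
  have hr : 0 < r := rpow_pos_of_pos h1p _
  have hrs : r ^ (α / 2 + 1) = 1 - p := by
    rw [hr_def, one_div, rpow_inv_rpow h1p.le (by positivity)]
  have hne : (univ : Finset (Fin M)).Nonempty := nonempty_of_sum_ne_zero (hsum ▸ one_ne_zero)
  set S := ∑ j : Fin M, r ^ (j : ℕ)
  have hS : 0 < S := sum_pos (fun j _ => pow_pos hr _) hne
  set T := ∑ j : Fin M, (1 - p) ^ (j : ℕ) * p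
  have hT : 0 < T := sum_pos (fun j _ => mul_pos (pow_pos h1p _) hp0) hne
  have hq' : ∀ i, q i = p / T * (r ^ (α / 2 + 1)) ^ (i : ℕ) := fun i => by
    rw [hq i, hrs]; ring
  have hxs : ∀ i, xstar i = S⁻¹ * r ^ (i : ℕ) := fun i => by
    rw [hxstar i, hqt, sub_sub_cancel, inv_mul_eq_div]
  have hq_pos : ∀ i, 0 < q i := fun i => by rw [hq' i, hrs]; positivity
  have hxs_pos : ∀ i, 0 < xstar i := fun i => by rw [hxs i]; positivity
  have hxs_sum : ∑ i, x i = ∑ i, xstar i := by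
    rw [hsum, eq_comm]
    simp only [hxs, ← mul_sum]
    exact inv_mul_cancel₀ hS.ne'
  have hstat : ∀ i, q i * xstar i ^ (-(α / 2)) = p / T * S⁻¹ ^ (-(α / 2 + 1)) * xstar i :=
    fun i => by rw [hq' i, hxs i]; exact geometric_mul_rpow_neg hr (inv_pos.2 hS) i
  exact ⟨sum_mul_rpow_neg_le_of_stationary hs.le (fun i => (hq_pos i).le) hx hxs_pos hxs_sum
      hstat,
    sum_mul_rpow_neg_eq_iff_of_stationary hs hq_pos hx hxs_pos hxs_sum hstat⟩

/-- If requests follow a truncated geometric pmf with parameter `p`, then the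
unique minimizer of `∑ q_i·x_i^{−α/2}` over probability vectors with positive
entries is the truncated geometric pmf with parameter
`q̃ = 1 − (1−p)^{1/(α/2+1)}`. -/
theorem geometric_caching_optimal
    (M : ℕ) (hM : 1 ≤ M) (α : ℝ) (hα : 2 < α)
    (p : ℝ) (hp : p ∈ Set.Ioo (0:ℝ) 1)
    (q : Fin M → ℝ)
    (hq : ∀ i, q i = (1 - p) ^ (i : ℕ) * p /
      ∑ j : Fin M, (1 - p) ^ (j : ℕ) * p)
    (qt : ℝ) (hqt : qt = 1 - (1 - p) ^ (1 / (α / 2 + 1)))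
    (xstar : Fin M → ℝ)
    (hxstar : ∀ i, xstar i = (1 - qt) ^ (i : ℕ) /
      ∑ j : Fin M, (1 - qt) ^ (j : ℕ))
    (x : Fin M → ℝ) (hx : ∀ i, 0 < x i) (hsum : ∑ i, x i = 1) :
    (∑ i : Fin M, q i * xstar i ^ (-(α / 2)) ≤
      ∑ i : Fin M, q i * x i ^ (-(α / 2))) ∧
    ((∑ i : Fin M, q i * x i ^ (-(α / 2)) =
      ∑ i : Fin M, q i * xstar i ^ (-(α / 2))) ↔ x = xstar) :=
  geometric_caching_optimal_general M α hα p hp q hq qt hqt xstar hxstar x hx hsum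
end

section
/- Let M ≥ 1 be an integer, γ_r > 0 and K > 0, and set b = γ_r/K. Assume b·(M·ln M − ln(M!)) ≤ 1. Define x*_i = 1/M + (b/M)·∑_{j=1}^M ln(j/i) for i = 1, …, M (equivalently, x*_i = a_i + b·ln((i+1)/i) with a_i = 1/M + (b/M)·∑_{j=1}^M ln(j/(i+1))). Then: (i) x*_i ≥ 0 for all i and ∑_{i=1}^M x*_i = 1, so x* is a pmf; and (ii) x* maximizes G(x) = ∑_{i=1}^M i^{−γ_r}·(1 − exp(−K·x_i)) over the simplex {x ∈ ℝ^M : x_i ≥ 0, ∑_{i=1}^M x_i = 1}. -/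
/-!
The objective is a sum of concave functions of the `x i`, so `x*` is a maximizer on the
hyperplane `∑ x i = 1` as soon as all marginal gains `K·i^{-γ_r}·exp(-K x*_i)` agree. Writing
`x*_i = c - b·ln i` with `c = (1 + b·ln M!)/M` and using `K·b = γ_r`, every
`i^{-γ_r}·exp(-K x*_i)` equals `exp(-K c)`. The tangent-line bound `e^t ≥ 1 + t` then turns the
common marginal gain into the inequality, while `ln i ≤ ln M` and `∑ ln i = ln M!` give that
`x*` is a pmf.
-/

open Real Finset

open scoped Nat

lemma mul_one_sub_exp_le_add_mul {w : ℝ} (hw : 0 ≤ w) (K x y : ℝ) :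
    w * (1 - exp (-(K * x))) ≤
      w * (1 - exp (-(K * y))) + K * (w * exp (-(K * y))) * (x - y) := by
  have hsplit : exp (-(K * x)) = exp (-(K * y)) * exp (-(K * (x - y))) := by
    rw [← exp_add]; ring_nf
  have htangent : 1 - K * (x - y) ≤ exp (-(K * (x - y))) := by
    linarith [add_one_le_exp (-(K * (x - y)))]
  rw [hsplit]
  nlinarith [mul_le_mul_of_nonneg_left htangent (mul_nonneg hw (exp_pos (-(K * y))).le)]

theorem sum_mul_one_sub_exp_le_of_mul_exp_eq {ι : Type*} (s : Finset ι) (w x y : ι → ℝ)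
    (K L : ℝ) (hw : ∀ i ∈ s, 0 ≤ w i) (hL : ∀ i ∈ s, w i * exp (-(K * y i)) = L)
    (hxy : ∑ i ∈ s, x i = ∑ i ∈ s, y i) :
    ∑ i ∈ s, w i * (1 - exp (-(K * x i))) ≤ ∑ i ∈ s, w i * (1 - exp (-(K * y i))) :=
  calc ∑ i ∈ s, w i * (1 - exp (-(K * x i)))
      ≤ ∑ i ∈ s, (w i * (1 - exp (-(K * y i))) + K * L * (x i - y i)) :=
        sum_le_sum fun i hi => hL i hi ▸ mul_one_sub_exp_le_add_mul (hw i hi) K (x i) (y i)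
    _ = ∑ i ∈ s, w i * (1 - exp (-(K * y i))) := by
        rw [sum_add_distrib, ← mul_sum, sum_sub_distrib, hxy, sub_self, mul_zero, add_zero]

lemma Real.log_factorial_eq_sum_fin (M : ℕ) :
    log (M ! : ℝ) = ∑ j : Fin M, log ((j : ℕ) + 1 : ℝ) := by
  rw [← Finset.prod_range_add_one_eq_factorial, Nat.cast_prod, log_prod (fun j _ => by positivity),
    ← Fin.sum_univ_eq_sum_range (fun j => log (((j + 1 : ℕ)) : ℝ))]
  push_cast
  rfl

lemma sum_fin_log_div_eq {a : ℝ} (ha : 0 < a) (M : ℕ) :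
    ∑ j : Fin M, log (((j : ℕ) + 1 : ℝ) / a) = log (M ! : ℝ) - M * log a := by
  simp only [log_div (by positivity : ((_ : ℕ) + 1 : ℝ) ≠ 0) ha.ne', sum_sub_distrib, sum_const,
    card_univ, Fintype.card_fin, nsmul_eq_mul, log_factorial_eq_sum_fin]

lemma rpow_neg_mul_exp_eq {t : ℝ} (ht : 0 < t) {γ K b : ℝ} (hKb : K * b = γ) (c : ℝ) :
    t ^ (-γ) * exp (-(K * (c - b * log t))) = exp (-(K * c)) := by
  rw [rpow_def_of_pos ht, ← exp_add, ← hKb]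
  ring_nf

/-- The Benford-type pmf `x*_i = 1/M + (b/M)·∑_j ln(j/i)` with `b = γ_r/K` is a
valid pmf when `b·(M·ln M − ln(M!)) ≤ 1`, and it maximizes
`G(x) = ∑ i^{−γ_r}·(1 − exp(−K·x_i))` over the probability simplex. -/
theorem benford_caching_optimal
    (M : ℕ) (hM : 1 ≤ M) (γr K b : ℝ) (hγr : 0 < γr) (hK : 0 < K)
    (hb : b = γr / K)
    (hcond : b * ((M : ℝ) * Real.log M - Real.log (Nat.factorial M)) ≤ 1)
    (xstar : Fin M → ℝ)
    (hxstar : ∀ i, xstar i = 1 / (M : ℝ) + (b / M) *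
      ∑ j : Fin M, Real.log (((j : ℕ) + 1 : ℝ) / ((i : ℕ) + 1 : ℝ))) :
    (∀ i, 0 ≤ xstar i) ∧ (∑ i, xstar i = 1) ∧
    (∀ x : Fin M → ℝ, (∀ i, 0 ≤ x i) → (∑ i, x i = 1) →
      ∑ i : Fin M, ((i : ℕ) + 1 : ℝ) ^ (-γr) * (1 - Real.exp (-(K * x i))) ≤
      ∑ i : Fin M, ((i : ℕ) + 1 : ℝ) ^ (-γr) *
        (1 - Real.exp (-(K * xstar i)))) := by
  have hMpos : (0 : ℝ) < M := by exact_mod_cast hM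
  have hb0 : 0 ≤ b := hb ▸ by positivity
  set c := (1 + b * log (M ! : ℝ)) / M with hc
  have hxs (i : Fin M) : xstar i = c - b * log ((i : ℕ) + 1 : ℝ) := by
    rw [hxstar, sum_fin_log_div_eq (by positivity), hc]
    field_simp
    ring
  have hsum : ∑ i, xstar i = 1 := by
    simp only [hxs, sum_sub_distrib, ← mul_sum, ← log_factorial_eq_sum_fin, sum_const, card_univ,
      Fintype.card_fin, nsmul_eq_mul, c]
    field_simp
    ring
  refine ⟨fun i => ?_, hsum, fun x _ hx => ?_⟩
  · have hlog : log ((i : ℕ) + 1 : ℝ) ≤ log M :=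
      log_le_log (by positivity) (by exact_mod_cast i.isLt)
    have hgap : b * (M * log ((i : ℕ) + 1 : ℝ) - log (M ! : ℝ)) ≤ 1 :=
      le_trans (by gcongr) hcond
    rw [hxs, show c - b * log ((i : ℕ) + 1 : ℝ)
        = (1 - b * (M * log ((i : ℕ) + 1 : ℝ) - log (M ! : ℝ))) / M by rw [hc]; field_simp; ring]
    exact div_nonneg (by linarith) hMpos.le
  · refine sum_mul_one_sub_exp_le_of_mul_exp_eq _ _ _ _ K (exp (-(K * c)))
      (fun i _ => by positivity) (fun i _ => ?_) (by rw [hx, hsum])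
    rw [hxs]
    exact rpow_neg_mul_exp_eq (by positivity) (by rw [hb]; field_simp) c
end

section
/- Let a > 0, b > 0 and α > 2. Then the function f(λ) = πλ ∫₀^∞ exp(−πλ·a·r − b·r^{α/2}) dr is strictly increasing and strictly concave on (0, ∞). -/
/-!
Writing `c = πλa` and `s = α/2`, the fundamental theorem of calculus applied to
`r ↦ -exp (-(c r) - b r^s)` gives
`c ∫₀^∞ exp (-(c r) - b r^s) dr = 1 - ∫₀^∞ w(r) exp (-(c r)) dr`,
where `w(r) = b s r^(s-1) exp (-(b r^s))` is a Weibull density. The right-hand integral is the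
Laplace transform of a positive function, hence strictly decreasing and strictly convex in `c`,
and both properties pass to the integral from the pointwise ones. Finally `P(λ) = Q(πaλ)/a`
with `Q(c) = c ∫₀^∞ exp (-(c r) - b r^s) dr`.
-/

open Real MeasureTheory Set Filter Topology

section ParametricIntegral

variable {X : Type*} [MeasurableSpace X] {μ : Measure X}

theorem integral_lt_integral_of_ae_lt {f g : X → ℝ} (hμ : μ ≠ 0) (hf : Integrable f μ)
    (hg : Integrable g μ) (hlt : ∀ᵐ x ∂μ, f x < g x) :
    ∫ x, f x ∂μ < ∫ x, g x ∂μ := by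
  have hsupp : 0 < μ (Function.support (g - f)) := by
    refine (Measure.measure_univ_pos.2 hμ).trans_le (measure_mono_ae ?_)
    filter_upwards [hlt] with x hx _
    exact (sub_pos.2 hx).ne'
  have hpos := (integral_pos_iff_support_of_nonneg_ae
    (hlt.mono fun x hx => (sub_pos.2 hx).le) (hg.sub hf)).2 hsupp
  rw [integral_sub hg hf] at hpos
  linarith

theorem strictAntiOn_integral {β : Type*} [Preorder β] {s : Set β} {F : β → X → ℝ}
    (hμ : μ ≠ 0) (hF : ∀ c ∈ s, Integrable (F c) μ)
    (hanti : ∀ᵐ x ∂μ, StrictAntiOn (fun c => F c x) s) :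
    StrictAntiOn (fun c => ∫ x, F c x ∂μ) s := fun c hc d hd hcd =>
  integral_lt_integral_of_ae_lt hμ (hF d hd) (hF c hc) (hanti.mono fun _ hx => hx hc hd hcd)

theorem strictConvexOn_integral {E : Type*} [AddCommGroup E] [Module ℝ E] {s : Set E}
    {F : E → X → ℝ} (hμ : μ ≠ 0) (hF : ∀ c ∈ s, Integrable (F c) μ)
    (hconv : ∀ᵐ x ∂μ, StrictConvexOn ℝ s (fun c => F c x)) :
    StrictConvexOn ℝ s (fun c => ∫ x, F c x ∂μ) := by
  have := ae_neBot.2 hμ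
  have hs : Convex ℝ s := hconv.exists.choose_spec.1
  refine ⟨hs, fun c hc d hd hcd p q hp hq hpq => ?_⟩
  have hFc := (hF c hc).const_mul p
  have hFd := (hF d hd).const_mul q
  have hlt : ∫ x, F (p • c + q • d) x ∂μ < ∫ x, (p * F c x + q * F d x) ∂μ :=
    integral_lt_integral_of_ae_lt hμ (hF _ (hs hc hd hp.le hq.le hpq)) (hFc.add hFd)
      (hconv.mono fun _ hx => hx.2 hc hd hcd hp hq hpq)
  rwa [integral_add hFc hFd, integral_const_mul, integral_const_mul] at hlt

end ParametricIntegral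

noncomputable def weibullDensity (b s r : ℝ) : ℝ := b * s * r ^ (s - 1) * exp (-(b * r ^ s))

section Weibull

variable {b s c : ℝ}

theorem weibullDensity_pos (hb : 0 < b) (hs : 0 < s) {r : ℝ} (hr : 0 < r) :
    0 < weibullDensity b s r := by
  unfold weibullDensity
  have := rpow_pos_of_pos hr (s - 1)
  positivity

theorem weibullDensity_mul_exp_neg_mul (r : ℝ) :
    weibullDensity b s r * exp (-(c * r)) =
      (c + b * s * r ^ (s - 1)) * exp (-(c * r) - b * r ^ s) - c * exp (-(c * r) - b * r ^ s) := by
  rw [weibullDensity, show -(c * r) - b * r ^ s = -(b * r ^ s) + -(c * r) by ring, exp_add]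
  ring

theorem hasDerivAt_neg_exp_neg_mul_sub_rpow {r : ℝ} (hr : 0 < r) :
    HasDerivAt (fun x => -exp (-(c * x) - b * x ^ s))
      ((c + b * s * r ^ (s - 1)) * exp (-(c * r) - b * r ^ s)) r := by
  have hpow : HasDerivAt (fun x : ℝ => x ^ s) (s * r ^ (s - 1)) r :=
    hasDerivAt_rpow_const (Or.inl hr.ne')
  exact ((((hasDerivAt_id' r).const_mul c).fun_neg.fun_sub (hpow.const_mul b)).exp).fun_neg
    |>.congr_deriv (by ring)

theorem tendsto_exp_neg_mul_sub_rpow_atTop (hb : 0 ≤ b) (hc : 0 < c) :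
    Tendsto (fun r => exp (-(c * r) - b * r ^ s)) atTop (𝓝 0) := by
  refine tendsto_exp_atBot.comp (tendsto_atBot_mono' atTop ?_
    (tendsto_neg_atTop_atBot.comp (tendsto_id.const_mul_atTop hc)))
  filter_upwards [eventually_ge_atTop 0] with r hr
  have : 0 ≤ b * r ^ s := mul_nonneg hb (rpow_nonneg hr s)
  simp only [Function.comp, id]
  linarith

theorem integral_Ioi_deriv_exp_neg_mul_sub_rpow (hb : 0 ≤ b) (hs : 0 < s) (hc : 0 < c) :
    IntegrableOn (fun r => (c + b * s * r ^ (s - 1)) * exp (-(c * r) - b * r ^ s)) (Ioi 0) ∧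
      ∫ r in Ioi 0, (c + b * s * r ^ (s - 1)) * exp (-(c * r) - b * r ^ s) = 1 := by
  have hcont : ContinuousWithinAt (fun x => -exp (-(c * x) - b * x ^ s)) (Ici 0) 0 := by
    have := continuous_rpow_const (q := s) hs.le
    exact Continuous.continuousWithinAt (by fun_prop)
  have hderiv r (hr : r ∈ Ioi (0 : ℝ)) :=
    hasDerivAt_neg_exp_neg_mul_sub_rpow (b := b) (s := s) (c := c) hr
  have hnonneg : ∀ r ∈ Ioi (0 : ℝ),
      0 ≤ (c + b * s * r ^ (s - 1)) * exp (-(c * r) - b * r ^ s) := fun r hr => by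
    have := rpow_nonneg (le_of_lt hr) (s - 1)
    positivity
  have hlim := (tendsto_exp_neg_mul_sub_rpow_atTop (s := s) hb hc).neg
  rw [neg_zero] at hlim
  refine ⟨integrableOn_Ioi_deriv_of_nonneg hcont hderiv hnonneg hlim, ?_⟩
  rw [integral_Ioi_of_hasDerivAt_of_nonneg hcont hderiv hnonneg hlim]
  simp [zero_rpow hs.ne']

theorem integrableOn_exp_neg_mul_sub_rpow (hb : 0 ≤ b) (hc : 0 < c) :
    IntegrableOn (fun r => exp (-(c * r) - b * r ^ s)) (Ioi 0) := by
  refine (exp_neg_integrableOn_Ioi 0 hc).mono' (by fun_prop) ?_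
  filter_upwards [ae_restrict_mem measurableSet_Ioi] with r hr
  rw [norm_of_nonneg (exp_pos _).le, exp_le_exp, neg_mul]
  have : 0 ≤ b * r ^ s := mul_nonneg hb (rpow_nonneg (le_of_lt hr) s)
  linarith

theorem integrableOn_weibullDensity_mul_exp_neg_mul (hb : 0 ≤ b) (hs : 0 < s) (hc : 0 < c) :
    IntegrableOn (fun r => weibullDensity b s r * exp (-(c * r))) (Ioi 0) := by
  simp only [weibullDensity_mul_exp_neg_mul]
  exact (integral_Ioi_deriv_exp_neg_mul_sub_rpow hb hs hc).1.sub
    ((integrableOn_exp_neg_mul_sub_rpow hb hc).const_mul c)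

theorem mul_integral_exp_neg_mul_sub_rpow (hb : 0 ≤ b) (hs : 0 < s) (hc : 0 < c) :
    c * ∫ r in Ioi 0, exp (-(c * r) - b * r ^ s) =
      1 - ∫ r in Ioi 0, weibullDensity b s r * exp (-(c * r)) := by
  obtain ⟨hint, hone⟩ := integral_Ioi_deriv_exp_neg_mul_sub_rpow hb hs hc
  simp only [weibullDensity_mul_exp_neg_mul]
  rw [integral_sub hint ((integrableOn_exp_neg_mul_sub_rpow hb hc).const_mul c), hone,
    integral_const_mul, sub_sub_cancel]

theorem strictAnti_mul_exp_neg_mul {w r : ℝ} (hw : 0 < w) (hr : 0 < r) :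
    StrictAnti fun c => w * exp (-(c * r)) := fun _ _ hcd =>
  mul_lt_mul_of_pos_left (exp_lt_exp.2 (neg_lt_neg (mul_lt_mul_of_pos_right hcd hr))) hw

theorem strictConvexOn_mul_exp_neg_mul {w r : ℝ} (hw : 0 < w) (hr : r ≠ 0) :
    StrictConvexOn ℝ univ fun c => w * exp (-(c * r)) := by
  refine ⟨convex_univ, fun x _ y _ hxy p q hp hq hpq => ?_⟩
  have hne : -(x * r) ≠ -(y * r) := by simpa [hr] using hxy
  have := strictConvexOn_exp.2 (mem_univ _) (mem_univ _) hne hp hq hpq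
  simp only [smul_eq_mul] at this ⊢
  calc w * exp (-((p * x + q * y) * r)) = w * exp (p * -(x * r) + q * -(y * r)) := by ring_nf
    _ < w * (p * exp (-(x * r)) + q * exp (-(y * r))) := by gcongr
    _ = p * (w * exp (-(x * r))) + q * (w * exp (-(y * r))) := by ring

theorem strictAntiOn_integral_weibullDensity_mul_exp_neg_mul (hb : 0 < b) (hs : 0 < s) :
    StrictAntiOn (fun c => ∫ r in Ioi 0, weibullDensity b s r * exp (-(c * r))) (Ioi 0) := by
  refine strictAntiOn_integral (by simp)
    (fun c hc => integrableOn_weibullDensity_mul_exp_neg_mul hb.le hs hc) ?_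
  filter_upwards [ae_restrict_mem measurableSet_Ioi] with r hr
  exact (strictAnti_mul_exp_neg_mul (weibullDensity_pos hb hs hr) hr).strictAntiOn _

theorem strictConvexOn_integral_weibullDensity_mul_exp_neg_mul (hb : 0 < b) (hs : 0 < s) :
    StrictConvexOn ℝ (Ioi 0)
      (fun c => ∫ r in Ioi 0, weibullDensity b s r * exp (-(c * r))) := by
  refine strictConvexOn_integral (by simp)
    (fun c hc => integrableOn_weibullDensity_mul_exp_neg_mul hb.le hs hc) ?_
  filter_upwards [ae_restrict_mem measurableSet_Ioi] with r hr
  exact (strictConvexOn_mul_exp_neg_mul (weibullDensity_pos hb hs hr) hr.ne').subset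
    (subset_univ _) (convex_Ioi 0)

theorem strictMonoOn_mul_integral_exp_neg_mul_sub_rpow (hb : 0 < b) (hs : 0 < s) :
    StrictMonoOn (fun c => c * ∫ r in Ioi 0, exp (-(c * r) - b * r ^ s)) (Ioi 0) := by
  intro c hc d hd hcd
  simp only [mul_integral_exp_neg_mul_sub_rpow hb.le hs hc,
    mul_integral_exp_neg_mul_sub_rpow hb.le hs hd]
  exact sub_lt_sub_left (strictAntiOn_integral_weibullDensity_mul_exp_neg_mul hb hs hc hd hcd) 1

theorem strictConcaveOn_mul_integral_exp_neg_mul_sub_rpow (hb : 0 < b) (hs : 0 < s) :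
    StrictConcaveOn ℝ (Ioi 0) (fun c => c * ∫ r in Ioi 0, exp (-(c * r) - b * r ^ s)) := by
  refine ((strictConvexOn_integral_weibullDensity_mul_exp_neg_mul hb hs).neg.add_const 1).congr ?_
  intro c hc
  simp [mul_integral_exp_neg_mul_sub_rpow hb.le hs hc, neg_add_eq_sub]

end Weibull

theorem StrictConcaveOn.const_mul_comp_const_mul {g : ℝ → ℝ} {m k : ℝ}
    (hg : StrictConcaveOn ℝ (Ioi 0) g) (hm : 0 < m) (hk : 0 < k) :
    StrictConcaveOn ℝ (Ioi 0) fun x => m * g (k * x) := by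
  refine ⟨convex_Ioi 0, fun x hx y hy hxy p q hp hq hpq => ?_⟩
  have hxy' : k * x ≠ k * y := (mul_right_injective₀ hk.ne').ne hxy
  have := hg.2 (mul_pos hk hx) (mul_pos hk hy) hxy' hp hq hpq
  simp only [smul_eq_mul] at this ⊢
  rw [show k * (p * x + q * y) = p * (k * x) + q * (k * y) by ring]
  nlinarith

/-- The coverage probability `λ ↦ πλ ∫₀^∞ exp(−πλ·a·r − b·r^{α/2}) dr` is
strictly increasing and strictly concave in the transmitter density on
`(0, ∞)`. -/
theorem coverage_strictMono_strictConcave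
    (a b α : ℝ) (ha : 0 < a) (hb : 0 < b) (hα : 2 < α) :
    StrictMonoOn (fun lam : ℝ => π * lam * ∫ r in Ioi (0:ℝ),
      Real.exp (-(π * lam * a * r) - b * r ^ (α / 2))) (Ioi 0) ∧
    StrictConcaveOn ℝ (Ioi 0) (fun lam : ℝ => π * lam * ∫ r in Ioi (0:ℝ),
      Real.exp (-(π * lam * a * r) - b * r ^ (α / 2))) := by
  have hs : 0 < α / 2 := by linarith
  have hk : 0 < π * a := by positivity
  set Q := fun c => c * ∫ r in Ioi 0, exp (-(c * r) - b * r ^ (α / 2)) with hQ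
  have hP : (fun lam : ℝ => π * lam * ∫ r in Ioi (0:ℝ),
      Real.exp (-(π * lam * a * r) - b * r ^ (α / 2))) =
      fun lam => a⁻¹ * Q (π * a * lam) := by
    funext lam
    rw [hQ, mul_right_comm π lam a]
    field_simp
  rw [hP]
  refine ⟨fun x hx y hy hxy => ?_,
    (strictConcaveOn_mul_integral_exp_neg_mul_sub_rpow hb hs).const_mul_comp_const_mul
      (inv_pos.2 ha) hk⟩
  exact mul_lt_mul_of_pos_left (strictMonoOn_mul_integral_exp_neg_mul_sub_rpow hb hs
    (mul_pos hk hx) (mul_pos hk hy) (by gcongr)) (inv_pos.2 ha)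
end

section
/- Let T > 0, σ² > 0, λ_t > 0 and p ∈ (0, 1]. Define ρ₁(T) = √T·∫_{1/√T}^∞ (1+u²)^{−1} du, ρ₂(T) = √T·∫₀^{1/√T} (1+u²)^{−1} du, and H = (p/√T − p·arctan(1/√T) + π/2) · πλ_t/√(2σ²). Then πλ_t·p · ∫₀^∞ exp( −πλ_t·p·v·(1−ρ₂(T)) − πλ_t·v·(ρ₁(T)+ρ₂(T)) − T·σ²·v² ) dv = πλ_t·p · √(π/(Tσ²)) · exp(H²/2) · Q(H), where Q(x) = (1/√(2π)) ∫ₓ^∞ exp(−y²/2) dy is the standard Gaussian tail probability. -/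
/-!
Since `ρ₁ + ρ₂ = √T·π/2` and `ρ₂ = √T·arctan(1/√T)`, the exponent is `-(a v) - Tσ² v²` with
`a = √(2Tσ²)·H`. Completing the square, `a v + Tσ² v² = ((c v + H)² - H²)/2` for `c = √(2Tσ²)`,
and the substitution `y = c v + H` turns the integral into `c⁻¹·e^{H²/2}·√(2π)·Q(H)`.
-/

open Real MeasureTheory Set

/-- The standard Gaussian tail probability `Q(x) = (1/√(2π)) ∫ₓ^∞ e^{−y²/2} dy`. -/
noncomputable def gaussQ (x : ℝ) : ℝ :=
  (Real.sqrt (2 * π))⁻¹ * ∫ y in Ioi x, Real.exp (-y ^ 2 / 2)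

section
variable {E : Type*} [NormedAddCommGroup E] [NormedSpace ℝ E]

theorem integral_comp_add_right_Ioi (f : ℝ → E) (a d : ℝ) :
    ∫ x in Ioi a, f (x + d) = ∫ y in Ioi (a + d), f y := by
  rw [← integral_indicator measurableSet_Ioi, ← integral_indicator measurableSet_Ioi]
  conv_rhs => rw [← integral_add_right_eq_self _ d]
  congr 1 with x
  simp only [indicator_apply, mem_Ioi, add_lt_add_iff_right]

theorem integral_comp_mul_add_Ioi (f : ℝ → E) (a : ℝ) {c : ℝ} (hc : 0 < c) (d : ℝ) :
    ∫ x in Ioi a, f (c * x + d) = c⁻¹ • ∫ y in Ioi (c * a + d), f y := by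
  rw [integral_comp_mul_left_Ioi (fun y => f (y + d)) a hc, integral_comp_add_right_Ioi]

end

theorem integral_Ioi_exp_neg_mul_sub_mul_sq (a : ℝ) {b : ℝ} (hb : 0 < b) :
    ∫ v in Ioi 0, exp (-(a * v) - b * v ^ 2) =
      √(π / b) * exp ((a / √(2 * b)) ^ 2 / 2) * gaussQ (a / √(2 * b)) := by
  have hsqrt : √(π / b) = √(2 * π) / √(2 * b) := by
    rw [← Real.sqrt_div' _ (by positivity)]
    field_simp
  have hc : 0 < √(2 * b) := by positivity
  have hc_sq : √(2 * b) ^ 2 = 2 * b := Real.sq_sqrt (by positivity)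
  rw [hsqrt]
  generalize √(2 * b) = c at hc hc_sq ⊢
  have hsquare : ∀ v, exp (-(a * v) - b * v ^ 2) =
      exp ((a / c) ^ 2 / 2) * exp (-(c * v + a / c) ^ 2 / 2) := by
    intro v
    rw [← exp_add]
    congr 1
    field_simp
    linear_combination v ^ 2 * c ^ 2 * hc_sq
  simp_rw [hsquare]
  rw [integral_const_mul, integral_comp_mul_add_Ioi (fun y => exp (-y ^ 2 / 2)) 0 hc, mul_zero,
    zero_add, gaussQ, smul_eq_mul]
  have : 0 < √(2 * π) := by positivity
  field_simp

theorem simultaneous_coverage_closed_form_alpha_four_general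
    (T σ2 lamt p : ℝ) (hT : 0 < T) (hσ2 : 0 < σ2)
    (ρ₁ ρ₂ H : ℝ)
    (hρ₁ : ρ₁ = Real.sqrt T *
      ∫ u in Ioi (1 / Real.sqrt T), (1 + u ^ 2)⁻¹)
    (hρ₂ : ρ₂ = Real.sqrt T *
      ∫ u in (0:ℝ)..(1 / Real.sqrt T), (1 + u ^ 2)⁻¹)
    (hH : H = (p / Real.sqrt T - p * Real.arctan (1 / Real.sqrt T) + π / 2) *
      (π * lamt / Real.sqrt (2 * σ2))) :
    π * lamt * p * ∫ v in Ioi (0:ℝ),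
        Real.exp (-(π * lamt * p * v * (1 - ρ₂)) -
          π * lamt * v * (ρ₁ + ρ₂) - T * σ2 * v ^ 2) =
      π * lamt * p * Real.sqrt (π / (T * σ2)) *
        Real.exp (H ^ 2 / 2) * gaussQ H := by
  rw [integral_Ioi_inv_one_add_sq] at hρ₁
  rw [integral_inv_one_add_sq, arctan_zero, sub_zero] at hρ₂
  set a := π * lamt * (p * (1 - ρ₂) + ρ₁ + ρ₂) with ha
  have hexponent : ∀ v, -(π * lamt * p * v * (1 - ρ₂)) - π * lamt * v * (ρ₁ + ρ₂) -
      T * σ2 * v ^ 2 = -(a * v) - T * σ2 * v ^ 2 := fun v => by ring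
  have hH_eq : H = a / √(2 * (T * σ2)) := by
    have : 0 < √T := by positivity
    have : 0 < √(2 * σ2) := by positivity
    rw [hH, ha, hρ₁, hρ₂, mul_left_comm, Real.sqrt_mul hT.le]
    field_simp
    ring
  simp_rw [hexponent]
  rw [integral_Ioi_exp_neg_mul_sub_mul_sq a (mul_pos hT hσ2), ← hH_eq]
  ring

/-- Closed-form coverage probability of a typical receiver in the simultaneous
multi-file model with Rayleigh fading (`μ = 1`) and path-loss exponent `α = 4`. -/
theorem simultaneous_coverage_closed_form_alpha_four
    (T σ2 lamt p : ℝ) (hT : 0 < T) (hσ2 : 0 < σ2) (hlamt : 0 < lamt)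
    (hp : 0 < p) (hp1 : p ≤ 1)
    (ρ₁ ρ₂ H : ℝ)
    (hρ₁ : ρ₁ = Real.sqrt T *
      ∫ u in Ioi (1 / Real.sqrt T), (1 + u ^ 2)⁻¹)
    (hρ₂ : ρ₂ = Real.sqrt T *
      ∫ u in (0:ℝ)..(1 / Real.sqrt T), (1 + u ^ 2)⁻¹)
    (hH : H = (p / Real.sqrt T - p * Real.arctan (1 / Real.sqrt T) + π / 2) *
      (π * lamt / Real.sqrt (2 * σ2))) :
    π * lamt * p * ∫ v in Ioi (0:ℝ),
        Real.exp (-(π * lamt * p * v * (1 - ρ₂)) -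
          π * lamt * v * (ρ₁ + ρ₂) - T * σ2 * v ^ 2) =
      π * lamt * p * Real.sqrt (π / (T * σ2)) *
        Real.exp (H ^ 2 / 2) * gaussQ H :=
  simultaneous_coverage_closed_form_alpha_four_general T σ2 lamt p hT hσ2 ρ₁ ρ₂ H hρ₁ hρ₂ hH
end

section
/- Let λ, β > 0, α > 0 and d ≥ 0. Then πλ ∫₀^∞ exp(−πλβr − d·r^{α/2}) dr ≤ 1/β, with equality if and only if d = 0. In particular, in the no-noise case (d = 0) the coverage probability equals β^{−1}, independently of the transmitter density λ, and for positive noise (d > 0) the coverage probability is strictly smaller than β^{−1}. -/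
open Real MeasureTheory Set

/-! The integrand is dominated by `exp (-(πλβ r))`, whose integral over `(0, ∞)` is
`1 / (πλβ)`, and multiplying by `πλ` gives `1 / β`. For `d > 0` the domination is strict
at every `r > 0`, so the inequality is strict. -/

theorem setIntegral_lt_setIntegral_of_forall_lt {X : Type*} [MeasurableSpace X] {μ : Measure X}
    {s : Set X} {f g : X → ℝ} (hs : MeasurableSet s) (hμs : μ s ≠ 0)
    (hf : IntegrableOn f s μ) (hg : IntegrableOn g s μ) (hfg : ∀ x ∈ s, f x < g x) :
    ∫ x in s, f x ∂μ < ∫ x in s, g x ∂μ := by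
  have hsupport : Function.support (g - f) ∩ s = s :=
    inter_eq_right.2 fun x hx ↦ (sub_pos.2 (hfg x hx)).ne'
  rw [← sub_pos, ← integral_sub hg hf]
  refine (setIntegral_pos_iff_support_of_nonneg_ae ?_ (hg.sub hf)).2 ?_
  · filter_upwards [ae_restrict_mem hs] with x hx using (sub_pos.2 (hfg x hx)).le
  · rwa [hsupport, pos_iff_ne_zero]

theorem integral_exp_neg_mul_Ioi_zero {c : ℝ} (hc : 0 < c) :
    ∫ r in Ioi (0:ℝ), exp (-(c * r)) = 1 / c := by
  simpa [neg_mul, neg_div_neg_eq] using integral_exp_mul_Ioi (neg_lt_zero.2 hc) 0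

theorem setIntegral_exp_neg_mul_sub_lt {c : ℝ} (hc : 0 < c) {g : ℝ → ℝ} (hg : Measurable g)
    (hg_pos : ∀ r ∈ Ioi (0:ℝ), 0 < g r) :
    ∫ r in Ioi (0:ℝ), exp (-(c * r) - g r) < 1 / c := by
  have hdom : IntegrableOn (fun r ↦ exp (-(c * r))) (Ioi 0) := by
    simpa only [neg_mul] using exp_neg_integrableOn_Ioi 0 hc
  have hlt : ∀ r ∈ Ioi (0:ℝ), exp (-(c * r) - g r) < exp (-(c * r)) := fun r hr ↦
    exp_lt_exp.2 (sub_lt_self _ (hg_pos r hr))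
  have hint : IntegrableOn (fun r ↦ exp (-(c * r) - g r)) (Ioi 0) := by
    refine hdom.mono' (by fun_prop) ?_
    filter_upwards [ae_restrict_mem measurableSet_Ioi] with r hr
    rw [norm_of_nonneg (exp_pos _).le]
    exact (hlt r hr).le
  rw [← integral_exp_neg_mul_Ioi_zero hc]
  exact setIntegral_lt_setIntegral_of_forall_lt measurableSet_Ioi (by simp) hint hdom hlt

theorem coverage_le_no_noise_general
    (lam β α d : ℝ) (hlam : 0 < lam) (hβ : 0 < β) (hd : 0 ≤ d) :
    (π * lam * ∫ r in Ioi (0:ℝ),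
        Real.exp (-(π * lam * β * r) - d * r ^ (α / 2)) ≤ 1 / β) ∧
    ((π * lam * ∫ r in Ioi (0:ℝ),
        Real.exp (-(π * lam * β * r) - d * r ^ (α / 2)) = 1 / β) ↔ d = 0) := by
  have hc : 0 < π * lam * β := by positivity
  have hscale : π * lam * (1 / (π * lam * β)) = 1 / β := by field_simp
  rcases hd.eq_or_lt with rfl | hd
  · have heq :
        π * lam * ∫ r in Ioi 0, exp (-(π * lam * β * r) - 0 * r ^ (α / 2)) = 1 / β := by
      simp only [zero_mul, sub_zero, integral_exp_neg_mul_Ioi_zero hc, hscale]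
    exact ⟨heq.le, iff_of_true heq rfl⟩
  · have hlt :
        π * lam * ∫ r in Ioi 0, exp (-(π * lam * β * r) - d * r ^ (α / 2)) < 1 / β := by
      rw [← hscale]
      refine mul_lt_mul_of_pos_left ?_ (by positivity)
      exact setIntegral_exp_neg_mul_sub_lt hc (by fun_prop)
        fun r hr ↦ mul_pos hd (rpow_pos_of_pos hr _)
    exact ⟨hlt.le, iff_of_false hlt.ne hd.ne'⟩

/-- The coverage probability `πλ ∫₀^∞ exp(−πλβr − d·r^{α/2}) dr` is at most
`1/β`, with equality if and only if the noise term `d` vanishes. -/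
theorem coverage_le_no_noise
    (lam β α d : ℝ) (hlam : 0 < lam) (hβ : 0 < β) (hα : 0 < α) (hd : 0 ≤ d) :
    (π * lam * ∫ r in Ioi (0:ℝ),
        Real.exp (-(π * lam * β * r) - d * r ^ (α / 2)) ≤ 1 / β) ∧
    ((π * lam * ∫ r in Ioi (0:ℝ),
        Real.exp (-(π * lam * β * r) - d * r ^ (α / 2)) = 1 / β) ↔ d = 0) :=
  coverage_le_no_noise_general lam β α d hlam hβ hd
end
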